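/- arXiv:1903.08274 — 12 statements merged into one kernel-verified Lean document; each statement's English description precedes it below -/
import Mathlib

section
/- Define s(n) as the maximum integer s such that there exist positive integers a, b with n = a·f_{s-1} + b·f_{s-2}. If (b,a) achieves this maximum (i.e., n = a·f_{s(n)-1} + b·f_{s(n)-2} with a,b ≥ 1), then a ≤ b. -/
/-!
If `a > b`, then `a·f_{s-1} + b·f_{s-2} = b·f_s + (a - b)·f_{s-1}` writes `n` in `s + 1` steps
with positive coefficients, contradicting the maximality of `s`.
-/

/-- `n` can be reached in `s` steps: `n = a·f_{s-1} + b·f_{s-2}` with `a, b ≥ 1`. -/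
def reaches (n : ℤ) (s : ℕ) : Prop :=
  ∃ a b : ℤ, 1 ≤ a ∧ 1 ≤ b ∧ n = a * (Nat.fib (s - 1) : ℤ) + b * (Nat.fib (s - 2) : ℤ)

/-- `s = s(n)` is the maximum number of steps. -/
def isSlow (n : ℤ) (s : ℕ) : Prop :=
  reaches n s ∧ ∀ s', reaches n s' → s' ≤ s

theorem fib_pred_combination_eq (s : ℕ) (hs : 2 ≤ s) (a b : ℤ) :
    a * (Nat.fib (s - 1) : ℤ) + b * (Nat.fib (s - 2) : ℤ) =
      b * (Nat.fib (s + 1 - 1) : ℤ) + (a - b) * (Nat.fib (s + 1 - 2) : ℤ) := by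
  obtain ⟨k, rfl⟩ : ∃ k, s = k + 2 := ⟨s - 2, by omega⟩
  have hfib : (Nat.fib (k + 2) : ℤ) = Nat.fib k + Nat.fib (k + 1) := by
    exact_mod_cast Nat.fib_add_two
  simp only [Nat.add_sub_cancel, show k + 2 + 1 - 2 = k + 1 by omega, show k + 2 - 1 = k + 1 by omega]
  rw [hfib]
  ring

theorem reaches_three {n : ℤ} (hn : 2 ≤ n) : reaches n 3 :=
  ⟨n - 1, 1, by omega, le_rfl, by simp [Nat.fib_two]⟩

theorem reaches_succ_of_lt {n a b : ℤ} {s : ℕ} (hs : 2 ≤ s) (hb : 1 ≤ b) (hba : b < a)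
    (h : n = a * (Nat.fib (s - 1) : ℤ) + b * (Nat.fib (s - 2) : ℤ)) : reaches n (s + 1) :=
  ⟨b, a - b, hb, by omega, h.trans (fib_pred_combination_eq s hs a b)⟩

theorem stmt2_general (n : ℤ) (hn : 2 ≤ n) (s : ℕ) (hs : isSlow n s) (a b : ℤ)
    (hb : 1 ≤ b)
    (h : n = a * (Nat.fib (s - 1) : ℤ) + b * (Nat.fib (s - 2) : ℤ)) :
    a ≤ b := by
  obtain ⟨-, hmax⟩ := hs
  have hs3 : 3 ≤ s := hmax 3 (reaches_three hn)
  by_contra! hba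
  have := hmax _ (reaches_succ_of_lt (by omega) hb hba h)
  omega

theorem stmt2 (n : ℤ) (hn : 2 ≤ n) (s : ℕ) (hs : isSlow n s) (a b : ℤ)
    (ha : 1 ≤ a) (hb : 1 ≤ b)
    (h : n = a * (Nat.fib (s - 1) : ℤ) + b * (Nat.fib (s - 2) : ℤ)) :
    a ≤ b :=
  stmt2_general n hn s hs a b hb h
end

section
/- Let (b,a) be an n-good pair with s = s(n). Then a pair (b',a') of positive integers is n-good if and only if there exists an integer k such that a' = a + k·f_{s-2} and b' = b - k·f_{s-1}. -/
/-- The pair `(b, a)` is `n`-good (for the slow step count `s = s(n)`). -/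
def isGood (n : ℤ) (s : ℕ) (b a : ℤ) : Prop :=
  1 ≤ a ∧ 1 ≤ b ∧ n = a * (Nat.fib (s - 1) : ℤ) + b * (Nat.fib (s - 2) : ℤ)

/-- The parameter `k` comes from a Bézout identity `u * p + v * q = 1`, so nothing is cancelled
and `p` or `q` may vanish. -/
theorem IsCoprime.exists_eq_add_mul_of_mul_add_mul_eq {p q a b a' b' : ℤ} (hpq : IsCoprime p q)
    (h : a * p + b * q = a' * p + b' * q) : ∃ k : ℤ, a' = a + k * q ∧ b' = b - k * p := by
  obtain ⟨u, v, huv⟩ := hpq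
  refine ⟨(a' - a) * v + (b - b') * u, ?_, ?_⟩
  · linear_combination (a - a') * huv - u * h
  · linear_combination (b - b') * huv - v * h

theorem isCoprime_fib_sub_one_fib_sub_two {s : ℕ} (hs : 2 ≤ s) :
    IsCoprime (Nat.fib (s - 1) : ℤ) (Nat.fib (s - 2)) := by
  obtain ⟨m, rfl⟩ := Nat.exists_eq_add_of_le' hs
  rw [Int.isCoprime_iff_gcd_eq_one, Int.gcd_natCast_natCast, Nat.gcd_comm]
  exact Nat.fib_coprime_fib_succ m

theorem two_le_of_isGood {n : ℤ} {s : ℕ} {b a : ℤ} (hn : n ≠ 0) (h : isGood n s b a) : 2 ≤ s := by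
  by_contra! hs
  -- for `s ≤ 1` both indices `s - 1` and `s - 2` truncate to `0`, forcing `n = 0`
  obtain ⟨-, -, rfl⟩ := h
  have h1 : s - 1 = 0 := by omega
  have h2 : s - 2 = 0 := by omega
  simp [h1, h2] at hn

theorem stmt3_general (n : ℤ) (hn : 2 ≤ n) (s : ℕ)
    (a b : ℤ) (h : isGood n s b a) (a' b' : ℤ) (ha' : 1 ≤ a') (hb' : 1 ≤ b') :
    isGood n s b' a' ↔
      ∃ k : ℤ, a' = a + k * (Nat.fib (s - 2) : ℤ) ∧ b' = b - k * (Nat.fib (s - 1) : ℤ) := by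
  have hcop := isCoprime_fib_sub_one_fib_sub_two (two_le_of_isGood (by omega) h)
  obtain ⟨-, -, rfl⟩ := h
  constructor
  · rintro ⟨-, -, heq⟩
    exact hcop.exists_eq_add_mul_of_mul_add_mul_eq heq
  · rintro ⟨k, rfl, rfl⟩
    exact ⟨ha', hb', by ring⟩

theorem stmt3 (n : ℤ) (hn : 2 ≤ n) (s : ℕ) (hs : isSlow n s)
    (a b : ℤ) (h : isGood n s b a) (a' b' : ℤ) (ha' : 1 ≤ a') (hb' : 1 ≤ b') :
    isGood n s b' a' ↔
      ∃ k : ℤ, a' = a + k * (Nat.fib (s - 2) : ℤ) ∧ b' = b - k * (Nat.fib (s - 1) : ℤ) :=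
  stmt3_general n hn s a b h a' b' ha' hb'
end

section
/- For every integer n ≥ 2, there exist unique integers a, b, t with t ≥ 2, 1 ≤ a ≤ b ≤ f_t, and n = a·f_t + b·f_{t-1}. -/
/-!
Read a pair `(a, b)` at level `k` as `a f_{k+1} + b f_k` (so the theorem's `t` is level `t - 1`).
Since `a f_{k+2} + b f_{k+1} = (a + b) f_{k+1} + a f_k`, a representation with `1 ≤ a ≤ b` at a
higher level descends to a pair `(x, y)` with `1 ≤ y < x` at every lower level. As `f_{k+1}` and
`f_k` are coprime, two pairs with the same value at level `k` differ by a multiple of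
`(-f_k, f_{k+1})`. So the second entry is determined modulo `f_{k+1}`, which gives uniqueness at a
fixed level, and no such shift moves `(x, y)` into the range `a ≤ b ≤ f_{k+1}`, which rules out
two levels. For existence, at a level with `f_k > n` the pair with second entry in `[1, f_{k+1}]`
has `a < 0 < b`; while `a ≤ 0`, the pair can be moved down one level keeping `a ≤ b`, and this
must stop with `a ≥ 1` because at level `0` the value would be `a ≤ 1`.
-/

open Nat (fib)

def fibComb (k : ℕ) (a b : ℤ) : ℤ := a * fib (k + 1) + b * fib k

structure IsFibRep (n : ℤ) (k : ℕ) (a b : ℤ) : Prop where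
  one_le : 1 ≤ a
  le : a ≤ b
  le_fib : b ≤ fib (k + 1)
  fibComb_eq : fibComb k a b = n

lemma fibComb_succ (k : ℕ) (a b : ℤ) : fibComb (k + 1) a b = fibComb k (a + b) a := by
  simp only [fibComb, Nat.fib_add_two, Nat.cast_add]
  ring

lemma isCoprime_fib_succ_fib (k : ℕ) : IsCoprime (fib (k + 1) : ℤ) (fib k) :=
  Int.isCoprime_iff_gcd_eq_one.mpr (Nat.fib_coprime_fib_succ k).symm

lemma fib_succ_pos (k : ℕ) : (0 : ℤ) < fib (k + 1) := by
  exact_mod_cast Nat.fib_pos.mpr k.succ_pos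

lemma IsCoprime.exists_eq_of_mul_add_mul_eq {F G a b a' b' : ℤ} (hFG : IsCoprime F G)
    (hF : F ≠ 0) (h : a * F + b * G = a' * F + b' * G) :
    ∃ m, b' = b + m * F ∧ a' = a - m * G := by
  obtain ⟨m, hm⟩ : F ∣ b' - b :=
    hFG.dvd_of_dvd_mul_right ⟨a - a', by linear_combination -h⟩
  refine ⟨m, by linarith, mul_right_cancel₀ hF ?_⟩
  linear_combination -h - G * hm

lemma IsCoprime.exists_mul_add_mul_eq {F G : ℤ} (hFG : IsCoprime F G) (hF : 0 < F) (n : ℤ) :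
    ∃ a b, a * F + b * G = n ∧ 1 ≤ b ∧ b ≤ F := by
  obtain ⟨u, v, huv⟩ := hFG
  have hmod := Int.emod_def (n * v - 1) F
  refine ⟨n * u + (n * v - 1) / F * G, (n * v - 1) % F + 1, ?_, ?_, ?_⟩
  · linear_combination n * huv + G * hmod
  · linarith [Int.emod_nonneg (n * v - 1) hF.ne']
  · linarith [Int.emod_lt_of_pos (n * v - 1) hF]

lemma exists_fibComb_eq (k : ℕ) (n : ℤ) :
    ∃ a b, fibComb k a b = n ∧ 1 ≤ b ∧ b ≤ fib (k + 1) :=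
  (isCoprime_fib_succ_fib k).exists_mul_add_mul_eq (fib_succ_pos k) n

lemma fibComb_eq_fibComb {k : ℕ} {a b a' b' : ℤ} (h : fibComb k a b = fibComb k a' b') :
    ∃ m, b' = b + m * fib (k + 1) ∧ a' = a - m * fib k :=
  (isCoprime_fib_succ_fib k).exists_eq_of_mul_add_mul_eq (fib_succ_pos k).ne' h

lemma eq_of_fibComb_eq {k : ℕ} {a b a' b' : ℤ} (hb : 1 ≤ b) (hbF : b ≤ fib (k + 1))
    (hb' : 1 ≤ b') (hbF' : b' ≤ fib (k + 1)) (h : fibComb k a b = fibComb k a' b') :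
    a' = a ∧ b' = b := by
  obtain ⟨m, rfl, rfl⟩ := fibComb_eq_fibComb h
  have hmF : m * fib (k + 1) = 0 :=
    Int.eq_zero_of_abs_lt_dvd (dvd_mul_left _ _) (abs_lt.mpr ⟨by linarith, by linarith⟩)
  obtain rfl : m = 0 := (mul_eq_zero.mp hmF).resolve_right (fib_succ_pos k).ne'
  simp

lemma fibComb_ne_of_lt {k : ℕ} {a b x y : ℤ} (hab : a ≤ b) (hbF : b ≤ fib (k + 1))
    (hy : 1 ≤ y) (hyx : y < x) : fibComb k x y ≠ fibComb k a b := by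
  intro h
  obtain ⟨m, rfl, rfl⟩ := fibComb_eq_fibComb h
  have hF := fib_succ_pos k
  have hG : (0 : ℤ) ≤ fib k := by positivity
  rcases le_or_gt m 0 with hm | hm
  · nlinarith [mul_nonpos_of_nonpos_of_nonneg hm hG, mul_nonpos_of_nonpos_of_nonneg hm hF.le]
  · nlinarith

lemma exists_fibComb_eq_of_lt {k : ℕ} (j : ℕ) {x y : ℤ} (hy : 1 ≤ y) (hyx : y < x) :
    ∃ x' y', 1 ≤ y' ∧ y' < x' ∧ fibComb k x' y' = fibComb (k + j) x y := by
  induction j generalizing x y with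
  | zero => exact ⟨x, y, hy, hyx, rfl⟩
  | succ j ih =>
    rw [← add_assoc, fibComb_succ]
    exact ih (by linarith) (by linarith)

lemma IsFibRep.level_le {n : ℤ} {k k' : ℕ} {a b a' b' : ℤ} (h : IsFibRep n k a b)
    (h' : IsFibRep n k' a' b') : k' ≤ k := by
  by_contra! hk
  obtain ⟨j, rfl⟩ := Nat.exists_eq_add_of_lt hk
  obtain ⟨ha', hab', -, hn'⟩ := h'
  rw [fibComb_succ] at hn'
  obtain ⟨x, y, hy, hyx, hxy⟩ :=
    exists_fibComb_eq_of_lt (k := k) j (x := a' + b') ha' (by linarith)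
  exact fibComb_ne_of_lt h.le h.le_fib hy hyx (hxy.trans (hn'.trans h.fibComb_eq.symm))

lemma IsFibRep.unique {n : ℤ} {k k' : ℕ} {a b a' b' : ℤ} (h : IsFibRep n k a b)
    (h' : IsFibRep n k' a' b') : a' = a ∧ b' = b ∧ k' = k := by
  obtain rfl : k' = k := le_antisymm (h.level_le h') (h'.level_le h)
  obtain ⟨ha, hab, hbF, hn⟩ := h
  obtain ⟨ha', hab', hbF', hn'⟩ := h'
  obtain ⟨rfl, rfl⟩ := eq_of_fibComb_eq (by linarith) hbF (by linarith) hbF' (hn.trans hn'.symm)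
  exact ⟨rfl, rfl, rfl⟩

lemma exists_fibComb_eq_of_nonpos {k : ℕ} {a b : ℤ} (ha : a ≤ 0) (hbF : b ≤ fib (k + 2)) :
    ∃ x y, fibComb k x y = fibComb (k + 1) a b ∧ 1 ≤ y ∧ y ≤ fib (k + 1) ∧ x ≤ y := by
  obtain ⟨x, y, hxy, hy, hyF⟩ := exists_fibComb_eq k (fibComb (k + 1) a b)
  obtain ⟨m, rfl, rfl⟩ := fibComb_eq_fibComb (hxy.trans (fibComb_succ k a b)).symm
  refine ⟨_, _, hxy, hy, hyF, ?_⟩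
  have hF := fib_succ_pos k
  have hm : 0 < m := by nlinarith
  have hfib : (fib (k + 2) : ℤ) = fib k + fib (k + 1) := mod_cast Nat.fib_add_two
  nlinarith

lemma exists_isFibRep_of_fibComb_eq {n : ℤ} (hn : 2 ≤ n) {k : ℕ} {a b : ℤ}
    (h : fibComb k a b = n) (hbF : b ≤ fib (k + 1)) (hab : a ≤ b) :
    ∃ k' a' b', 1 ≤ k' ∧ IsFibRep n k' a' b' := by
  induction k generalizing a b with
  | zero =>
    norm_num [fibComb] at h hbF
    omega
  | succ k ih =>
    by_cases ha : 1 ≤ a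
    · exact ⟨k + 1, a, b, k.succ_pos, ha, hab, hbF, h⟩
    obtain ⟨x, y, hxy, -, hyF, hxy'⟩ := exists_fibComb_eq_of_nonpos (by omega : a ≤ 0) hbF
    exact ih (hxy.trans h) hyF hxy'

lemma exists_isFibRep {n : ℤ} (hn : 2 ≤ n) : ∃ k a b, 1 ≤ k ∧ IsFibRep n k a b := by
  obtain ⟨a, b, h, hb, hbF⟩ := exists_fibComb_eq (n.toNat + 2) n
  have hfib : n < fib (n.toNat + 2) := by
    have := Nat.le_fib_add_one (n.toNat + 2)
    omega
  have hF := fib_succ_pos (n.toNat + 2)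
  have ha : a < 0 := by
    simp only [fibComb] at h
    nlinarith
  exact exists_isFibRep_of_fibComb_eq hn h hbF (by linarith)

theorem stmt7 (n : ℤ) (hn : 2 ≤ n) :
    ∃ a b : ℤ, ∃ t : ℕ, (2 ≤ t ∧ 1 ≤ a ∧ a ≤ b ∧ b ≤ (Nat.fib t : ℤ) ∧
        n = a * (Nat.fib t : ℤ) + b * (Nat.fib (t - 1) : ℤ)) ∧
      ∀ a' b' : ℤ, ∀ t' : ℕ, (2 ≤ t' ∧ 1 ≤ a' ∧ a' ≤ b' ∧ b' ≤ (Nat.fib t' : ℤ) ∧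
          n = a' * (Nat.fib t' : ℤ) + b' * (Nat.fib (t' - 1) : ℤ)) →
        a' = a ∧ b' = b ∧ t' = t := by
  obtain ⟨k, a, b, hk, hrep⟩ := exists_isFibRep hn
  refine ⟨a, b, k + 1,
    ⟨by omega, hrep.one_le, hrep.le, hrep.le_fib, hrep.fibComb_eq.symm⟩, ?_⟩
  rintro a' b' t' ⟨ht', ha', hab', hbF', hn'⟩
  obtain ⟨k', rfl⟩ : ∃ k', t' = k' + 1 := ⟨t' - 1, by omega⟩
  obtain ⟨rfl, rfl, rfl⟩ := hrep.unique ⟨ha', hab', hbF', hn'.symm⟩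
  exact ⟨rfl, rfl, rfl⟩
end

section
/- Let n ≥ 2 and let a, b, t be the unique integers with t ≥ 2, 1 ≤ a ≤ b ≤ f_t, and n = a·f_t + b·f_{t-1}. If t is even, then a·f_{t+1} + b·f_t = ⌊φ·n⌋, and if t is odd, then a·f_{t+1} + b·f_t = ⌈φ·n⌉, where φ = (1+√5)/2. -/
noncomputable def phi : ℝ := (1 + Real.sqrt 5) / 2

/-! Binet gives `a f_{t+1} + b f_t = φ n + ψ^(t-1) (a ψ + b)`. The error term has absolute value
`|ψ|^(t-1) (a ψ + b) ∈ (0, 1)`, because `0 < a ψ + b < f_t ≤ φ^(t-1) = |ψ|^(1-t)`, and its sign is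
`(-1)^(t-1)`: for even `t` the next term lies just below `φ n`, for odd `t` just above. -/

open goldenRatio Set

namespace Real

theorem fib_succ_le_goldenRatio_pow (k : ℕ) : (Nat.fib (k + 1) : ℝ) ≤ φ ^ k := by
  refine le_of_mul_le_mul_left ?_ goldenRatio_pos
  rw [← pow_succ']
  linarith [goldenRatio_mul_fib_succ_add_fib k, (Nat.fib k).cast_nonneg (α := ℝ)]

theorem neg_goldenConj_pow_mul_fib_succ_le_one (k : ℕ) : (-ψ) ^ k * Nat.fib (k + 1) ≤ 1 :=
  calc (-ψ) ^ k * Nat.fib (k + 1)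
      ≤ (-ψ) ^ k * φ ^ k :=
        mul_le_mul_of_nonneg_left (fib_succ_le_goldenRatio_pow k)
          (pow_nonneg (neg_nonneg.2 goldenConj_neg.le) k)
    _ = 1 := by rw [← mul_pow, ← inv_goldenRatio, inv_mul_cancel₀ goldenRatio_ne_zero, one_pow]

theorem add_mul_fib_add_two (a b : ℝ) (k : ℕ) :
    a * Nat.fib (k + 2) + b * Nat.fib (k + 1) =
      φ * (a * Nat.fib (k + 1) + b * Nat.fib k) + ψ ^ k * (a * ψ + b) := by
  linear_combination a * fib_succ_sub_goldenRatio_mul_fib (k + 1) +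
    b * fib_succ_sub_goldenRatio_mul_fib k

theorem mul_goldenConj_add_mem_Ioo {a b : ℝ} (ha : 0 < a) (hab : a ≤ b) : a * ψ + b ∈ Ioo 0 b :=
  ⟨by nlinarith [neg_one_lt_goldenConj], by nlinarith [goldenConj_neg]⟩

theorem neg_goldenConj_pow_mul_mem_Ioo {a b : ℝ} (k : ℕ) (ha : 0 < a) (hab : a ≤ b)
    (hb : b ≤ Nat.fib (k + 1)) : (-ψ) ^ k * (a * ψ + b) ∈ Ioo 0 1 := by
  have hpow : 0 < (-ψ) ^ k := pow_pos (neg_pos.2 goldenConj_neg) k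
  obtain ⟨hpos, hlt⟩ := mul_goldenConj_add_mem_Ioo ha hab
  refine ⟨mul_pos hpow hpos, ?_⟩
  calc (-ψ) ^ k * (a * ψ + b) < (-ψ) ^ k * Nat.fib (k + 1) := by gcongr; linarith
    _ ≤ 1 := neg_goldenConj_pow_mul_fib_succ_le_one k

end Real

open Real

theorem stmt8_general (n : ℤ) (a b : ℤ) (t : ℕ) (ht : 2 ≤ t)
    (ha : 1 ≤ a) (hab : a ≤ b) (hb : b ≤ (Nat.fib t : ℤ))
    (hdec : n = a * (Nat.fib t : ℤ) + b * (Nat.fib (t - 1) : ℤ)) :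
    (Even t → a * (Nat.fib (t + 1) : ℤ) + b * (Nat.fib t : ℤ) = ⌊phi * (n : ℝ)⌋) ∧
    (Odd t → a * (Nat.fib (t + 1) : ℤ) + b * (Nat.fib t : ℤ) = ⌈phi * (n : ℝ)⌉) := by
  obtain ⟨k, rfl⟩ : ∃ k, t = k + 1 := ⟨t - 1, by omega⟩
  obtain ⟨he0, he1⟩ := neg_goldenConj_pow_mul_mem_Ioo k (a := a) (b := b)
    (by exact_mod_cast ha) (by exact_mod_cast hab) (by exact_mod_cast hb)
  have hm : ((a * Nat.fib (k + 1 + 1) + b * Nat.fib (k + 1) : ℤ) : ℝ) =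
      phi * n + ψ ^ k * (a * ψ + b) := by
    rw [hdec, Nat.add_sub_cancel]
    push_cast
    exact add_mul_fib_add_two a b k
  push_cast at hm
  constructor
  · intro hev
    have hk : Odd k := by simpa [Nat.even_add_one] using hev
    rw [hk.neg_pow] at he0 he1
    refine (Int.floor_eq_iff.2 ⟨?_, ?_⟩).symm <;> push_cast <;> linarith
  · intro hodd
    have hk : Even k := by simpa [Nat.odd_add_one] using hodd
    rw [hk.neg_pow] at he0 he1
    refine (Int.ceil_eq_iff.2 ⟨?_, ?_⟩).symm <;> push_cast <;> linarith

theorem stmt8 (n : ℤ) (hn : 2 ≤ n) (a b : ℤ) (t : ℕ) (ht : 2 ≤ t)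
    (ha : 1 ≤ a) (hab : a ≤ b) (hb : b ≤ (Nat.fib t : ℤ))
    (hdec : n = a * (Nat.fib t : ℤ) + b * (Nat.fib (t - 1) : ℤ)) :
    (Even t → a * (Nat.fib (t + 1) : ℤ) + b * (Nat.fib t : ℤ) = ⌊phi * (n : ℝ)⌋) ∧
    (Odd t → a * (Nat.fib (t + 1) : ℤ) + b * (Nat.fib t : ℤ) = ⌈phi * (n : ℝ)⌉) :=
  stmt8_general n a b t ht ha hab hb hdec
end

section
/- Let n ≥ 2 with unique decomposition n = a·f_t + b·f_{t-1}, 1 ≤ a ≤ b ≤ f_t, t ≥ 2. Then there do not exist positive integers a', b' with n = a'·f_{t+1} + b'·f_t; that is, s(n) = t + 1 exactly. -/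
lemma no_higher (n : ℤ) (a b : ℤ) (t : ℕ) (ht : 2 ≤ t)
    (ha : 1 ≤ a) (hab : a ≤ b) (hb : b ≤ (Nat.fib t : ℤ))
    (hdec : n = a * (Nat.fib t : ℤ) + b * (Nat.fib (t - 1) : ℤ)) :
    ¬ ∃ a' b' : ℤ, 1 ≤ a' ∧ 1 ≤ b' ∧
        n = a' * (Nat.fib (t + 1) : ℤ) + b' * (Nat.fib t : ℤ) := by
  rintro ⟨a', b', ha', hb', heq⟩
  set F : ℤ := (Nat.fib t : ℤ) with hF
  set G : ℤ := (Nat.fib (t - 1) : ℤ) with hG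
  have ht1 : t - 1 + 1 = t := by omega
  have hfib : (Nat.fib (t + 1) : ℤ) = F + G := by
    have h2 : t - 1 + 2 = t + 1 := by omega
    rw [← h2, Nat.fib_add_two]
    push_cast
    rw [ht1]
    ring
  have hG1 : 1 ≤ G := by
    have h : 1 ≤ Nat.fib (t - 1) := Nat.fib_pos.mpr (by omega)
    rw [hG]; exact_mod_cast h
  have hF1 : 1 ≤ F := by
    have h : 1 ≤ Nat.fib t := Nat.fib_pos.mpr (by omega)
    rw [hF]; exact_mod_cast h
  have hcop : IsCoprime F G := by
    have h := Nat.fib_coprime_fib_succ (t - 1)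
    rw [ht1] at h
    exact (Nat.isCoprime_iff_coprime.mpr h).symm
  rw [hfib] at heq
  have key : (a' + b' - a) * F = (b - a') * G := by
    have := heq.symm.trans hdec
    ring_nf at this ⊢
    linarith
  have hdvd : F ∣ (b - a') := by
    apply hcop.dvd_of_dvd_mul_right
    exact ⟨a' + b' - a, by rw [← key]; ring⟩
  obtain ⟨k, hk⟩ := hdvd
  have hk2 : a' + b' - a = k * G := by
    have hFne : F ≠ 0 := by linarith
    have : (a' + b' - a) * F = (k * G) * F := by
      rw [key, hk]; ring
    exact mul_right_cancel₀ hFne this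
  rcases le_or_gt 1 k with hk1 | hk1
  · -- a' = b - k*F ≤ F - F ≤ 0, contradiction
    nlinarith
  · -- k ≤ 0 : b' = a - a' + k*G ≤ a - b ≤ 0, contradiction
    have hk0 : k ≤ 0 := by omega
    nlinarith

lemma reaches_pred (n : ℤ) (s : ℕ) (hs : 3 ≤ s) (h : reaches n s) :
    reaches n (s - 1) := by
  obtain ⟨a, b, ha, hb, hn⟩ := h
  refine ⟨a + b, a, by linarith, ha, ?_⟩
  rw [show s - 1 - 1 = s - 2 from by omega, show s - 1 - 2 = s - 3 from by omega]
  have hfib : Nat.fib (s - 1) = Nat.fib (s - 2) + Nat.fib (s - 3) := by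
    rw [show s - 1 = (s - 3) + 2 from by omega, Nat.fib_add_two,
      show s - 3 + 1 = s - 2 from by omega]
    ring
  rw [hfib] at hn
  push_cast at hn
  linarith

theorem stmt9 (n : ℤ) (hn : 2 ≤ n) (a b : ℤ) (t : ℕ) (ht : 2 ≤ t)
    (ha : 1 ≤ a) (hab : a ≤ b) (hb : b ≤ (Nat.fib t : ℤ))
    (hdec : n = a * (Nat.fib t : ℤ) + b * (Nat.fib (t - 1) : ℤ)) :
    (¬ ∃ a' b' : ℤ, 1 ≤ a' ∧ 1 ≤ b' ∧
        n = a' * (Nat.fib (t + 1) : ℤ) + b' * (Nat.fib t : ℤ)) ∧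
    isSlow n (t + 1) := by
  have h1 := no_higher n a b t ht ha hab hb hdec
  refine ⟨h1, ?_, ?_⟩
  · refine ⟨a, b, ha, le_trans ha hab, ?_⟩
    rw [show t + 1 - 1 = t from by omega, show t + 1 - 2 = t - 1 from by omega]
    exact hdec
  · intro s' hr
    by_contra hcon
    push_neg at hcon
    -- descend from s' to t + 2
    have hdesc : ∀ m : ℕ, reaches n (t + 2 + m) → reaches n (t + 2) := by
      intro m
      induction m with
      | zero => exact fun h => h
      | succ k ih =>
        intro h
        apply ih
        have := reaches_pred n (t + 2 + (k + 1)) (by omega) h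
        rwa [show t + 2 + (k + 1) - 1 = t + 2 + k from by omega] at this
    have hr2 : reaches n (t + 2) := by
      have hm : ∃ m : ℕ, s' = t + 2 + m := ⟨s' - (t + 2), by omega⟩
      obtain ⟨m, rfl⟩ := hm
      exact hdesc m hr
    obtain ⟨a', b', ha', hb', heq⟩ := hr2
    rw [show t + 2 - 1 = t + 1 from by omega, show t + 2 - 2 = t from by omega] at heq
    exact h1 ⟨a', b', ha', hb', heq⟩
end

section
/- Let n ≥ 2 with unique decomposition n = a·f_t + b·f_{t-1}, 1 ≤ a ≤ b ≤ f_t, t ≥ 2. Then n has exactly two n-good pairs if and only if a > f_{t-1}; in that case the two n-good pairs are (b, a) and (b + f_t, a − f_{t-1}). -/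
/-- `(b, a)` is an `n`-good pair: it achieves the maximal step count `s(n)`. -/
def isGoodPair (n : ℤ) (b a : ℤ) : Prop :=
  ∃ s : ℕ, isSlow n s ∧ 1 ≤ a ∧ 1 ≤ b ∧
    n = a * (Nat.fib (s - 1) : ℤ) + b * (Nat.fib (s - 2) : ℤ)

/-!
Since `f_t` and `f_{t-1}` are coprime, the solutions of `n = x f_t + y f_{t-1}` are exactly
`(x, y) = (a + c f_{t-1}, b - c f_t)`, `c ∈ ℤ`. A representation `n = x f_{t+1} + y f_t` with
`x, y ≥ 1` is also `(x + y) f_t + x f_{t-1}`, and `x + y > x` together with `a ≤ b` forces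
`c ≥ 1`, hence `x ≤ b - f_t ≤ 0`. So `s(n) = t + 1`; since `b ≤ f_t ≤ 2 f_{t-1}` the only
positive solutions at that level are `c = 0` and, exactly when `a > f_{t-1}`, `c = -1`.
-/

theorem IsCoprime.exists_eq_add_mul_of_mul_add_mul_eq_s10 {p q x y x' y' : ℤ} (h : IsCoprime p q)
    (hq : q ≠ 0) (heq : x' * p + y' * q = x * p + y * q) :
    ∃ c, x' = x + c * q ∧ y' = y - c * p := by
  have key : p * (x' - x) = q * (y - y') := by linear_combination heq
  obtain ⟨c, hc⟩ : q ∣ x' - x := h.symm.dvd_of_dvd_mul_left ⟨y - y', key⟩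
  have hy : y - y' = c * p := mul_left_cancel₀ hq (by rw [← key, hc]; ring)
  exact ⟨c, by linear_combination hc, by linear_combination -hy⟩

lemma reaches_add_two_iff {n : ℤ} {m : ℕ} :
    reaches n (m + 2) ↔ ∃ x y : ℤ, 1 ≤ x ∧ 1 ≤ y ∧
      n = x * (Nat.fib (m + 1) : ℤ) + y * (Nat.fib m : ℤ) := by
  simp only [reaches, Nat.add_sub_cancel, Nat.add_succ_sub_one]

lemma reaches_of_reaches_succ {n : ℤ} {s : ℕ} (hs : 2 ≤ s) (h : reaches n (s + 1)) :
    reaches n s := by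
  obtain ⟨m, rfl⟩ : ∃ m, s = m + 2 := ⟨s - 2, by omega⟩
  obtain ⟨x, y, hx, hy, hn⟩ := reaches_add_two_iff.mp h
  refine reaches_add_two_iff.mpr ⟨x + y, x, by omega, hx, ?_⟩
  rw [hn, Nat.fib_add_two]
  push_cast
  ring

lemma reaches_of_le {n : ℤ} {s s' : ℕ} (hs : 2 ≤ s) (hss' : s ≤ s') (h : reaches n s') :
    reaches n s := by
  induction s', hss' using Nat.le_induction with
  | base => exact h
  | succ k hk ih => exact ih (reaches_of_reaches_succ (hs.trans hk) h)

lemma fib_isCoprime (m : ℕ) : IsCoprime (Nat.fib (m + 2) : ℤ) (Nat.fib (m + 1) : ℤ) :=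
  Nat.isCoprime_iff_coprime.mpr (Nat.fib_coprime_fib_succ (m + 1)).symm

lemma intCast_fib_succ_pos (m : ℕ) : (0 : ℤ) < Nat.fib (m + 1) := by
  exact_mod_cast Nat.fib_pos.mpr m.succ_pos

section Decomposition

variable {n a b : ℤ} {m : ℕ}

lemma exists_eq_of_fib_repr (hdec : n = a * (Nat.fib (m + 2) : ℤ) + b * (Nat.fib (m + 1) : ℤ))
    {x y : ℤ} (hxy : n = x * (Nat.fib (m + 2) : ℤ) + y * (Nat.fib (m + 1) : ℤ)) :
    ∃ c, x = a + c * Nat.fib (m + 1) ∧ y = b - c * Nat.fib (m + 2) :=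
  (fib_isCoprime m).exists_eq_add_mul_of_mul_add_mul_eq_s10 (intCast_fib_succ_pos m).ne'
    (hxy.symm.trans hdec)

lemma not_reaches_add_four (hab : a ≤ b) (hb : b ≤ (Nat.fib (m + 2) : ℤ))
    (hdec : n = a * (Nat.fib (m + 2) : ℤ) + b * (Nat.fib (m + 1) : ℤ)) :
    ¬ reaches n (m + 4) := by
  intro h
  obtain ⟨x, y, hx, hy, hn⟩ := reaches_add_two_iff.mp h
  have hF2 := intCast_fib_succ_pos (m + 1)
  have hF1 := intCast_fib_succ_pos m
  obtain ⟨c, hxy, hx'⟩ := exists_eq_of_fib_repr hdec (x := x + y) (y := x)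
    (by rw [hn, Nat.fib_add_two (n := m + 1)]; push_cast; ring)
  have hc : 1 ≤ c := by nlinarith
  nlinarith

lemma isSlow_add_three (ha : 1 ≤ a) (hab : a ≤ b) (hb : b ≤ (Nat.fib (m + 2) : ℤ))
    (hdec : n = a * (Nat.fib (m + 2) : ℤ) + b * (Nat.fib (m + 1) : ℤ)) :
    isSlow n (m + 3) := by
  refine ⟨reaches_add_two_iff.mpr ⟨a, b, ha, ha.trans hab, hdec⟩, fun s' hs' => ?_⟩
  by_contra! hlt
  exact not_reaches_add_four hab hb hdec (reaches_of_le (by omega) hlt hs')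

lemma isGoodPair_iff (ha : 1 ≤ a) (hab : a ≤ b) (hb : b ≤ (Nat.fib (m + 2) : ℤ))
    (hdec : n = a * (Nat.fib (m + 2) : ℤ) + b * (Nat.fib (m + 1) : ℤ)) (r : ℤ × ℤ) :
    isGoodPair n r.1 r.2 ↔ r = (b, a) ∨
      ((Nat.fib (m + 1) : ℤ) < a ∧
        r = (b + (Nat.fib (m + 2) : ℤ), a - (Nat.fib (m + 1) : ℤ))) := by
  have hslow := isSlow_add_three ha hab hb hdec
  obtain ⟨y, x⟩ := r
  constructor
  · rintro ⟨s, hs, hx, hy, hn⟩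
    obtain rfl : s = m + 3 := le_antisymm (hslow.2 s hs.1) (hs.2 _ hslow.1)
    obtain ⟨c, rfl, rfl⟩ := exists_eq_of_fib_repr hdec hn
    have hF1 := intCast_fib_succ_pos m
    have hF2 : (Nat.fib (m + 2) : ℤ) ≤ 2 * Nat.fib (m + 1) := by
      have hrec := Nat.fib_add_two (n := m)
      have hmono := Nat.fib_le_fib_succ (n := m)
      zify at hrec hmono
      omega
    have hc0 : c ≤ 0 := by nlinarith
    have hc1 : -1 ≤ c := by nlinarith
    interval_cases c
    · right; exact ⟨by linarith, by simp only [Prod.mk.injEq]; constructor <;> ring⟩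
    · left; simp
  · rintro (h | ⟨hlt, h⟩) <;> simp only [Prod.mk.injEq] at h <;> obtain ⟨rfl, rfl⟩ := h
    · exact ⟨m + 3, hslow, ha, ha.trans hab, hdec⟩
    · refine ⟨m + 3, hslow, by linarith, by linarith [intCast_fib_succ_pos (m + 1)], ?_⟩
      change n = _ * (Nat.fib (m + 2) : ℤ) + _ * (Nat.fib (m + 1) : ℤ)
      linear_combination hdec

end Decomposition

theorem stmt10_general (n : ℤ) (a b : ℤ) (t : ℕ) (ht : 2 ≤ t)
    (ha : 1 ≤ a) (hab : a ≤ b) (hb : b ≤ (Nat.fib t : ℤ))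
    (hdec : n = a * (Nat.fib t : ℤ) + b * (Nat.fib (t - 1) : ℤ)) :
    ((∃ p q : ℤ × ℤ, p ≠ q ∧
        (∀ r : ℤ × ℤ, isGoodPair n r.1 r.2 ↔ r = p ∨ r = q)) ↔
      (Nat.fib (t - 1) : ℤ) < a) ∧
    ((Nat.fib (t - 1) : ℤ) < a →
      ∀ r : ℤ × ℤ, isGoodPair n r.1 r.2 ↔
        r = (b, a) ∨ r = (b + (Nat.fib t : ℤ), a - (Nat.fib (t - 1) : ℤ))) := by
  obtain ⟨m, rfl⟩ : ∃ m, t = m + 2 := ⟨t - 2, by omega⟩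
  simp only [Nat.add_succ_sub_one] at hdec ⊢
  have hgood := isGoodPair_iff ha hab hb hdec
  refine ⟨⟨?_, fun hlt => ?_⟩, fun hlt r => by simp [hgood, hlt]⟩
  · rintro ⟨p, q, hpq, hall⟩
    by_contra! hle
    have hunique (r : ℤ × ℤ) : isGoodPair n r.1 r.2 ↔ r = (b, a) := by simp [hgood, hle]
    exact hpq (((hunique p).1 ((hall p).2 (.inl rfl))).trans
      ((hunique q).1 ((hall q).2 (.inr rfl))).symm)
  · refine ⟨(b, a), (b + (Nat.fib (m + 2) : ℤ), a - (Nat.fib (m + 1) : ℤ)), by simp,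
      fun r => by simp [hgood, hlt]⟩

theorem stmt10 (n : ℤ) (hn : 2 ≤ n) (a b : ℤ) (t : ℕ) (ht : 2 ≤ t)
    (ha : 1 ≤ a) (hab : a ≤ b) (hb : b ≤ (Nat.fib t : ℤ))
    (hdec : n = a * (Nat.fib t : ℤ) + b * (Nat.fib (t - 1) : ℤ)) :
    ((∃ p q : ℤ × ℤ, p ≠ q ∧
        (∀ r : ℤ × ℤ, isGoodPair n r.1 r.2 ↔ r = p ∨ r = q)) ↔
      (Nat.fib (t - 1) : ℤ) < a) ∧
    ((Nat.fib (t - 1) : ℤ) < a →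
      ∀ r : ℤ × ℤ, isGoodPair n r.1 r.2 ↔
        r = (b, a) ∨ r = (b + (Nat.fib t : ℤ), a - (Nat.fib (t - 1) : ℤ))) :=
  stmt10_general n a b t ht ha hab hb hdec
end

section
/- Let n ≥ 2 with unique decomposition n = a·f_t + b·f_{t-1}, 1 ≤ a ≤ b ≤ f_t, t ≥ 2. If t is even, then φ^{−t}·(φ·b − a) = φ·n − ⌊φ·n⌋, and if t is odd, then φ^{−t}·(φ·b − a) = ⌈φ·n⌉ − φ·n. -/
open Real goldenRatio

/-! Since `ψ = -φ⁻¹` and `f_{k+1} - φ f_k = ψ^k`, the integer `m = a f_{t+1} + b f_t` satisfies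
`φ n - m = ψ^t (φ b - a) = (-1)^t φ^{-t} (φ b - a)`. The hypotheses `1 ≤ a ≤ b ≤ f_t` place
`φ^{-t} (φ b - a)` strictly between `0` and `1`, so `m` is `⌊φ n⌋` for even `t` and `⌈φ n⌉` for odd
`t`. -/

section FloorCeil

variable {R : Type*} [Ring R] [LinearOrder R] [IsStrictOrderedRing R] [FloorRing R]

lemma sub_floor_eq_of_eq_intCast_add {x d : R} {m : ℤ} (h : x = m + d) (hd₀ : 0 ≤ d)
    (hd₁ : d < 1) : x - ⌊x⌋ = d := by
  have : ⌊x⌋ = m := Int.floor_eq_iff.2 ⟨by simpa [h], by simpa [h]⟩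
  rw [this, h, add_sub_cancel_left]

lemma ceil_sub_eq_of_eq_intCast_sub {x d : R} {m : ℤ} (h : x = m - d) (hd₀ : 0 ≤ d)
    (hd₁ : d < 1) : ⌈x⌉ - x = d := by
  have : ⌈x⌉ = m := Int.ceil_eq_iff.2 ⟨by simpa [h], by simpa [h]⟩
  rw [this, h, sub_sub_cancel]

end FloorCeil

lemma goldenRatio_mul_fib_add_fib (a b : ℝ) (s : ℕ) :
    φ * (a * Nat.fib (s + 1) + b * Nat.fib s) =
      a * Nat.fib (s + 2) + b * Nat.fib (s + 1) + ψ ^ (s + 1) * (φ * b - a) := by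
  have hψφ : ψ ^ (s + 1) * φ = -ψ ^ s := by
    rw [pow_succ, mul_assoc, goldenConj_mul_goldenRatio, mul_neg_one]
  linear_combination (-a) * fib_succ_sub_goldenRatio_mul_fib (s + 1)
    - b * fib_succ_sub_goldenRatio_mul_fib s - b * hψφ

lemma goldenConj_pow (t : ℕ) : ψ ^ t = (-1) ^ t * φ ^ (-(t : ℤ)) := by
  rw [zpow_neg, zpow_natCast, ← inv_pow, ← mul_pow, inv_goldenRatio]; ring

lemma goldenRatio_mul_fib_le_pow (t : ℕ) : φ * Nat.fib t ≤ φ ^ t := by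
  cases t with
  | zero => simp
  | succ s =>
    rw [← goldenRatio_mul_fib_succ_add_fib]
    exact le_add_of_nonneg_right (Nat.cast_nonneg _)

lemma goldenRatio_zpow_neg_mul_sub_mem_Ioo {a b : ℝ} {t : ℕ} (ha : 1 ≤ a) (hab : a ≤ b)
    (hb : b ≤ Nat.fib t) : φ ^ (-(t : ℤ)) * (φ * b - a) ∈ Set.Ioo 0 1 := by
  have hpow : 0 < φ ^ t := pow_pos goldenRatio_pos t
  have hlt : φ * b - a < φ ^ t := by
    nlinarith [goldenRatio_mul_fib_le_pow t, goldenRatio_pos]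
  rw [zpow_neg, zpow_natCast]
  refine ⟨mul_pos (inv_pos.2 hpow) (by nlinarith [one_lt_goldenRatio]), ?_⟩
  rwa [inv_mul_lt_iff₀ hpow, mul_one]

theorem stmt12_general (n : ℤ) (a b : ℤ) (t : ℕ) (ht : 2 ≤ t)
    (ha : 1 ≤ a) (hab : a ≤ b) (hb : b ≤ (Nat.fib t : ℤ))
    (hdec : n = a * (Nat.fib t : ℤ) + b * (Nat.fib (t - 1) : ℤ)) :
    (Even t → phi ^ (-(t : ℤ)) * (phi * b - a) = phi * n - ⌊phi * (n : ℝ)⌋) ∧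
    (Odd t → phi ^ (-(t : ℤ)) * (phi * b - a) = ⌈phi * (n : ℝ)⌉ - phi * n) := by
  obtain ⟨s, rfl⟩ : ∃ s, t = s + 1 := ⟨t - 1, by omega⟩
  set d := φ ^ (-((s + 1 : ℕ) : ℤ)) * (φ * b - a)
  obtain ⟨hd₀, hd₁⟩ : d ∈ Set.Ioo 0 1 :=
    goldenRatio_zpow_neg_mul_sub_mem_Ioo (by exact_mod_cast ha) (by exact_mod_cast hab)
      (by exact_mod_cast hb)
  have hkey :
      φ * n = ((a * Nat.fib (s + 2) + b * Nat.fib (s + 1) : ℤ) : ℝ) + (-1) ^ (s + 1) * d := by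
    rw [hdec, Nat.add_sub_cancel]
    push_cast
    rw [goldenRatio_mul_fib_add_fib, goldenConj_pow, mul_assoc]
  rw [show phi = φ from rfl]
  constructor
  · intro he
    rw [he.neg_one_pow, one_mul] at hkey
    exact (sub_floor_eq_of_eq_intCast_add hkey hd₀.le hd₁).symm
  · intro ho
    rw [ho.neg_one_pow, neg_one_mul, ← sub_eq_add_neg] at hkey
    exact (ceil_sub_eq_of_eq_intCast_sub hkey hd₀.le hd₁).symm

theorem stmt12 (n : ℤ) (hn : 2 ≤ n) (a b : ℤ) (t : ℕ) (ht : 2 ≤ t)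
    (ha : 1 ≤ a) (hab : a ≤ b) (hb : b ≤ (Nat.fib t : ℤ))
    (hdec : n = a * (Nat.fib t : ℤ) + b * (Nat.fib (t - 1) : ℤ)) :
    (Even t → phi ^ (-(t : ℤ)) * (phi * b - a) = phi * n - ⌊phi * (n : ℝ)⌋) ∧
    (Odd t → phi ^ (-(t : ℤ)) * (phi * b - a) = ⌈phi * (n : ℝ)⌉ - phi * n) :=
  stmt12_general n a b t ht ha hab hb hdec
end

section
/- Let n ≥ 2 with unique decomposition n = a·f_t + b·f_{t-1}, 1 ≤ a ≤ b ≤ f_t, t ≥ 2. Then 0 < φ^{−t}·(φ·b − a) ≤ φ/√5 < 1. -/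
open Real goldenRatio

lemma abs_goldenConj_lt_one : |ψ| < 1 :=
  abs_lt.mpr ⟨neg_one_lt_goldenConj, goldenConj_neg.trans one_pos⟩

lemma goldenRatio_lt_sqrt_five : φ < √5 := by
  have h : (1 : ℝ) < √5 := by
    rw [Real.lt_sqrt zero_le_one]
    norm_num
  rw [goldenRatio]
  linarith

lemma goldenRatio_div_sqrt_five_lt_one : φ / √5 < 1 :=
  (div_lt_one (goldenRatio_pos.trans goldenRatio_lt_sqrt_five)).mpr goldenRatio_lt_sqrt_five

lemma neg_goldenRatio_mul_goldenConj_pow_le (t : ℕ) : -(φ * ψ ^ t) ≤ √5 :=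
  calc -(φ * ψ ^ t) ≤ |φ * ψ ^ t| := neg_le_abs _
    _ = φ * |ψ| ^ t := by rw [abs_mul, abs_pow, abs_of_pos goldenRatio_pos]
    _ ≤ φ * 1 := by
        gcongr
        exact pow_le_one₀ (abs_nonneg ψ) abs_goldenConj_lt_one.le
    _ ≤ √5 := by linarith [goldenRatio_lt_sqrt_five]

lemma goldenRatio_mul_fib_sub_one_le (t : ℕ) : φ * Nat.fib t - 1 ≤ φ ^ t * (φ / √5) := by
  have hs : 0 < √5 := by positivity
  have hbinet : φ * Nat.fib t - 1 = φ ^ t * (φ / √5) + (-(φ * ψ ^ t) - √5) / √5 := by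
    rw [coe_fib_eq]
    field_simp
    ring
  rw [hbinet, add_le_iff_nonpos_right]
  exact div_nonpos_of_nonpos_of_nonneg
    (sub_nonpos.mpr (neg_goldenRatio_mul_goldenConj_pow_le t)) hs.le

theorem stmt13_general (a b : ℤ) (t : ℕ)
    (ha : 1 ≤ a) (hab : a ≤ b) (hb : b ≤ (Nat.fib t : ℤ)) :
    0 < phi ^ (-(t : ℤ)) * (phi * b - a) ∧
    phi ^ (-(t : ℤ)) * (phi * b - a) ≤ phi / Real.sqrt 5 ∧
    phi / Real.sqrt 5 < 1 := by
  change 0 < φ ^ (-(t : ℤ)) * (φ * b - a) ∧ φ ^ (-(t : ℤ)) * (φ * b - a) ≤ φ / √5 ∧ φ / √5 < 1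
  have ha' : (1 : ℝ) ≤ a := by exact_mod_cast ha
  have hab' : (a : ℝ) ≤ b := by exact_mod_cast hab
  have hb' : (b : ℝ) ≤ Nat.fib t := by exact_mod_cast hb
  have hpos : 0 < φ * b - a := by nlinarith [one_lt_goldenRatio]
  have hle : φ * b - a ≤ φ ^ t * (φ / √5) := by
    nlinarith [goldenRatio_mul_fib_sub_one_le t, goldenRatio_pos]
  rw [zpow_neg, zpow_natCast]
  refine ⟨by positivity, ?_, goldenRatio_div_sqrt_five_lt_one⟩
  rwa [inv_mul_le_iff₀ (by positivity)]

theorem stmt13 (n : ℤ) (hn : 2 ≤ n) (a b : ℤ) (t : ℕ) (ht : 2 ≤ t)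
    (ha : 1 ≤ a) (hab : a ≤ b) (hb : b ≤ (Nat.fib t : ℤ))
    (hdec : n = a * (Nat.fib t : ℤ) + b * (Nat.fib (t - 1) : ℤ)) :
    0 < phi ^ (-(t : ℤ)) * (phi * b - a) ∧
    phi ^ (-(t : ℤ)) * (phi * b - a) ≤ phi / Real.sqrt 5 ∧
    phi / Real.sqrt 5 < 1 :=
  stmt13_general a b t ha hab hb
end

section
/- Say n ≥ 2 is a down-integer if its unique decomposition n = a·f_t + b·f_{t-1} (with 1 ≤ a ≤ b ≤ f_t, t ≥ 2) has t even, and an up-integer if t is odd. If the fractional part δ_n = φ·n − ⌊φ·n⌋ satisfies δ_n < 1/(√5·φ), then n is a down-integer; and if ⌈φ·n⌉ − φ·n < 1/(√5·φ), then n is an up-integer. -/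
open Real goldenRatio

lemma goldenRatio_mul_fib_add (a b : ℝ) (s : ℕ) :
    φ * (a * Nat.fib (s + 1) + b * Nat.fib s) =
      a * Nat.fib (s + 2) + b * Nat.fib (s + 1) - ψ ^ s * (a * ψ + b) := by
  linear_combination -a * fib_succ_sub_goldenRatio_mul_fib (s + 1) -
    b * fib_succ_sub_goldenRatio_mul_fib s

lemma neg_goldenConj_pow_mul_mem_Ioo {a b : ℝ} {s : ℕ} (ha : 1 ≤ a) (hab : a ≤ b)
    (hb : b ≤ Nat.fib (s + 1)) :
    0 < (-ψ) ^ s * (b + a * ψ) ∧ (-ψ) ^ s * (b + a * ψ) < φ / √5 := by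
  set x := -ψ with hx
  have hx0 : 0 < x := neg_pos.2 goldenConj_neg
  have hx1 : x < 1 := neg_lt.2 neg_one_lt_goldenConj
  have hxφ : x * φ = 1 := by rw [hx, neg_mul, goldenConj_mul_goldenRatio, neg_neg]
  have hax : x ≤ a * x := le_mul_of_one_le_left hx0.le ha
  rw [show b + a * ψ = b - a * x by ring]
  constructor
  · have hlt : a * x < b := (mul_lt_of_lt_one_right (by linarith) hx1).trans_le hab
    exact mul_pos (pow_pos hx0 s) (sub_pos.2 hlt)
  have hfib : x ^ s * Nat.fib (s + 1) ≤ (φ + x ^ s * x ^ (s + 1)) / √5 := by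
    have hconj : -ψ ^ (s + 1) ≤ x ^ (s + 1) := by
      calc -ψ ^ (s + 1) ≤ |ψ ^ (s + 1)| := neg_le_abs _
        _ = x ^ (s + 1) := by rw [abs_pow, abs_of_neg goldenConj_neg]
    have hφ : x ^ s * φ ^ (s + 1) = φ := by
      rw [pow_succ, ← mul_assoc, ← mul_pow, hxφ, one_pow, one_mul]
    rw [coe_fib_eq, mul_div_assoc', mul_sub, hφ, sub_eq_add_neg, ← mul_neg]
    gcongr
  have hs5 : x ^ s < √5 := calc
    x ^ s ≤ 1 := pow_le_one₀ hx0.le hx1.le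
    _ < √5 := by rw [lt_sqrt zero_le_one]; norm_num
  calc x ^ s * (b - a * x) ≤ x ^ s * (Nat.fib (s + 1) - x) := by gcongr
    _ = x ^ s * Nat.fib (s + 1) - x ^ (s + 1) := by ring
    _ ≤ (φ + x ^ s * x ^ (s + 1)) / √5 - x ^ (s + 1) := by gcongr
    _ < φ / √5 := by
      rw [add_div, add_sub_assoc, add_lt_iff_neg_left, sub_neg, div_lt_iff₀ (by positivity),
        mul_comm (x ^ (s + 1))]
      gcongr

lemma one_div_sqrt_five_mul_goldenRatio : 1 / (√5 * φ) = 1 - φ / √5 := by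
  calc 1 / (√5 * φ) = φ⁻¹ / √5 := by rw [one_div, mul_inv, div_eq_inv_mul]
    _ = (√5 - φ) / √5 := by rw [inv_goldenRatio, ← goldenRatio_sub_goldenConj]; ring
    _ = 1 - φ / √5 := by rw [sub_div, div_self (by positivity)]

lemma sub_floor_intCast_sub (N : ℤ) {e : ℝ} (h0 : 0 < e) (h1 : e ≤ 1) :
    (N - e) - ⌊(N : ℝ) - e⌋ = 1 - e := by
  rw [Int.floor_eq_iff.2 (show ((N - 1 : ℤ) : ℝ) ≤ N - e ∧ (N : ℝ) - e < (N - 1 : ℤ) + 1 by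
    push_cast; constructor <;> linarith)]
  push_cast; ring

lemma ceil_intCast_add_sub (N : ℤ) {e : ℝ} (h0 : 0 < e) (h1 : e ≤ 1) :
    (⌈(N : ℝ) + e⌉ : ℝ) - (N + e) = 1 - e := by
  rw [Int.ceil_eq_iff.2 (show ((N + 1 : ℤ) : ℝ) - 1 < N + e ∧ (N : ℝ) + e ≤ (N + 1 : ℤ) by
    push_cast; constructor <;> linarith)]
  push_cast; ring

theorem stmt14_general (n : ℤ) (a b : ℤ) (t : ℕ)
    (ha : 1 ≤ a) (hab : a ≤ b) (hb : b ≤ (Nat.fib t : ℤ))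
    (hdec : n = a * (Nat.fib t : ℤ) + b * (Nat.fib (t - 1) : ℤ)) :
    (phi * n - ⌊phi * (n : ℝ)⌋ < 1 / (Real.sqrt 5 * phi) → Even t) ∧
    ((⌈phi * (n : ℝ)⌉ : ℝ) - phi * n < 1 / (Real.sqrt 5 * phi) → Odd t) := by
  obtain ⟨s, rfl⟩ : ∃ s, t = s + 1 :=
    Nat.exists_eq_add_one.2 (Nat.pos_of_ne_zero (by rintro rfl; simp at hb; omega))
  set N : ℤ := a * Nat.fib (s + 2) + b * Nat.fib (s + 1)
  set e : ℝ := (-ψ) ^ s * (b + a * ψ)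
  obtain ⟨he0, he1⟩ : 0 < e ∧ e < φ / √5 :=
    neg_goldenConj_pow_mul_mem_Ioo (by exact_mod_cast ha) (by exact_mod_cast hab)
      (by exact_mod_cast hb)
  have hφn : φ * n = N - ψ ^ s * (a * ψ + b) := by
    rw [hdec, Nat.add_sub_cancel]
    push_cast [N]
    exact goldenRatio_mul_fib_add a b s
  have he_le_one : e ≤ 1 :=
    (he1.trans (sub_pos.1 (one_div_sqrt_five_mul_goldenRatio ▸ by positivity))).le
  rw [show phi = φ from rfl, one_div_sqrt_five_mul_goldenRatio]
  rcases Nat.even_or_odd s with hs | hs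
  · have : φ * n = N - e := by rw [hφn, ← hs.neg_pow]; ring
    refine ⟨fun h => absurd h ?_, fun _ => hs.add_one⟩
    rw [this, sub_floor_intCast_sub N he0 he_le_one]
    linarith
  · have : φ * n = N + e := by rw [hφn, ← neg_neg (ψ ^ s), ← hs.neg_pow]; ring
    refine ⟨fun _ => hs.add_one, fun h => absurd h ?_⟩
    rw [this, ceil_intCast_add_sub N he0 he_le_one]
    linarith

theorem stmt14 (n : ℤ) (hn : 2 ≤ n) (a b : ℤ) (t : ℕ) (ht : 2 ≤ t)
    (ha : 1 ≤ a) (hab : a ≤ b) (hb : b ≤ (Nat.fib t : ℤ))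
    (hdec : n = a * (Nat.fib t : ℤ) + b * (Nat.fib (t - 1) : ℤ)) :
    (phi * n - ⌊phi * (n : ℝ)⌋ < 1 / (Real.sqrt 5 * phi) → Even t) ∧
    ((⌈phi * (n : ℝ)⌉ : ℝ) - phi * n < 1 / (Real.sqrt 5 * phi) → Odd t) :=
  stmt14_general n a b t ha hab hb hdec
end

section
/- Let n ≥ 2 have unique decomposition n = a·f_t + b·f_{t-1} with 1 ≤ a ≤ b ≤ f_t, t ≥ 2, and suppose a > f_{t-1} (equivalently, n has two n-good pairs). Then t is even if and only if the nearest integer to φ·n equals ⌊φ·n⌋; more precisely, if t is even then φ·n − ⌊φ·n⌋ < 1/2, and if t is odd then ⌈φ·n⌉ − φ·n < 1/2. -/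
open Real goldenRatio

theorem goldenRatio_mul_add_fib (a b : ℝ) (m : ℕ) :
    φ * (a * Nat.fib (m + 1) + b * Nat.fib m) =
      a * Nat.fib (m + 2) + b * Nat.fib (m + 1) - (ψ * a + b) * ψ ^ m := by
  linear_combination (-a) * fib_succ_sub_goldenRatio_mul_fib (m + 1) -
    b * fib_succ_sub_goldenRatio_mul_fib m

theorem goldenConj_mul_add_pos {a b : ℝ} (ha : 0 < a) (hab : a ≤ b) : 0 < ψ * a + b := by
  nlinarith [neg_one_lt_goldenConj]

theorem abs_goldenConj_pow_mul_fib_add_lt (m : ℕ) :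
    |ψ ^ m| * (Nat.fib m + ψ ^ m + ψ) < 1 / 2 := by
  set p := ψ ^ m
  set s : ℝ := (-1) ^ m
  have hs : s ^ 2 = 1 := by rw [← pow_mul, mul_comm, pow_mul]; norm_num
  have habs : |p| = s * p := by
    rw [abs_pow, abs_of_neg goldenConj_neg, neg_pow]
  have hfib : √5 * (p * Nat.fib m) = s - p ^ 2 := by
    have hpq : p * φ ^ m = s := by rw [← mul_pow, goldenConj_mul_goldenRatio]
    rw [coe_fib_eq]; field_simp; linear_combination hpq
  have hp1 : |p| ≤ 1 := by
    rw [abs_pow, abs_of_neg goldenConj_neg]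
    exact pow_le_one₀ (by linarith [goldenConj_neg]) (by linarith [neg_one_lt_goldenConj])
  have hsp : s * p ^ 2 ≤ |p| := by
    rw [sq, ← mul_assoc, ← habs]; nlinarith [le_abs_self p, abs_nonneg p]
  have h5 : √5 ^ 2 = 5 := Real.sq_sqrt (by norm_num)
  have h2 : 2 < √5 := by nlinarith [Real.sqrt_nonneg 5]
  have h73 : √5 < 7 / 3 := by nlinarith
  have hscaled : √5 * (|p| * (Nat.fib m + p + ψ)) ≤ 1 := by
    have hψ : √5 * ψ = (√5 - 5) / 2 := by rw [goldenConj]; linear_combination -h5 / 2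
    calc √5 * (|p| * (Nat.fib m + p + ψ))
        = 1 + (√5 - 1) * (s * p ^ 2) + |p| * (√5 * ψ) := by
          rw [habs]; linear_combination s * hfib + hs
      _ ≤ 1 + (√5 - 1) * |p| + |p| * ((√5 - 5) / 2) := by
          rw [hψ]; gcongr; linarith
      _ ≤ 1 := by nlinarith [abs_nonneg p]
  nlinarith

theorem abs_goldenConj_mul_add_mul_pow_lt {a b : ℝ} {m : ℕ} (ha : Nat.fib m + 1 ≤ a)
    (hab : a ≤ b) (hb : b ≤ Nat.fib (m + 1)) : |(ψ * a + b) * ψ ^ m| < 1 / 2 := by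
  have hpos : 0 < ψ * a + b :=
    goldenConj_mul_add_pos ((by positivity : (0 : ℝ) < Nat.fib m + 1).trans_le ha) hab
  have hle : ψ * a + b ≤ Nat.fib m + ψ ^ m + ψ := by
    have hψa : ψ * a ≤ ψ * (Nat.fib m + 1) := mul_le_mul_of_nonpos_left ha goldenConj_neg.le
    linear_combination hψa + hb + fib_succ_sub_goldenRatio_mul_fib m
      + (Nat.fib m : ℝ) * goldenRatio_add_goldenConj
  calc |(ψ * a + b) * ψ ^ m| = |ψ ^ m| * (ψ * a + b) := by
        rw [abs_mul, abs_of_pos hpos, mul_comm]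
    _ ≤ |ψ ^ m| * (Nat.fib m + ψ ^ m + ψ) := by gcongr
    _ < 1 / 2 := abs_goldenConj_pow_mul_fib_add_lt m

theorem stmt15_general (n : ℤ) (a b : ℤ) (t : ℕ)
    (hab : a ≤ b) (hb : b ≤ (Nat.fib t : ℤ))
    (hdec : n = a * (Nat.fib t : ℤ) + b * (Nat.fib (t - 1) : ℤ))
    (htwo : (Nat.fib (t - 1) : ℤ) < a) :
    (Even t → phi * n - ⌊phi * (n : ℝ)⌋ < 1 / 2) ∧
    (Odd t → (⌈phi * (n : ℝ)⌉ : ℝ) - phi * n < 1 / 2) := by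
  obtain _ | m := t
  · simp only [Nat.fib_zero, Nat.cast_zero] at hb htwo; omega
  simp only [Nat.add_sub_cancel] at hdec htwo
  set N : ℤ := a * Nat.fib (m + 2) + b * Nat.fib (m + 1)
  set E : ℝ := (ψ * a + b) * ψ ^ m
  have hφn : phi * n = N - E := by
    rw [hdec]; push_cast [N]; exact goldenRatio_mul_add_fib a b m
  have hE : |E| < 1 / 2 := abs_goldenConj_mul_add_mul_pow_lt
    (by exact_mod_cast htwo) (by exact_mod_cast hab) (by exact_mod_cast hb)
  have hpos : 0 < ψ * a + b := goldenConj_mul_add_pos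
    (by exact_mod_cast (Int.natCast_nonneg _).trans_lt htwo) (by exact_mod_cast hab)
  refine ⟨fun ht => ?_, fun ht => ?_⟩
  · have hm : Odd m := Nat.not_even_iff_odd.1 (Nat.even_add_one.1 ht)
    have hE0 : E < 0 := mul_neg_of_pos_of_neg hpos (hm.pow_neg goldenConj_neg)
    have hN : (N : ℝ) ≤ ⌊phi * (n : ℝ)⌋ := by
      exact_mod_cast Int.le_floor.2 (by rw [hφn]; linarith)
    linarith [abs_lt.1 hE]
  · have hm : Even m := Nat.not_odd_iff_even.1 (Nat.odd_add_one.1 ht)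
    have hE0 : 0 < E := mul_pos hpos (hm.pow_pos goldenConj_ne_zero)
    have hN : (⌈phi * (n : ℝ)⌉ : ℝ) ≤ N := by
      exact_mod_cast Int.ceil_le.2 (by rw [hφn]; linarith)
    linarith [abs_lt.1 hE]

theorem stmt15 (n : ℤ) (hn : 2 ≤ n) (a b : ℤ) (t : ℕ) (ht : 2 ≤ t)
    (ha : 1 ≤ a) (hab : a ≤ b) (hb : b ≤ (Nat.fib t : ℤ))
    (hdec : n = a * (Nat.fib t : ℤ) + b * (Nat.fib (t - 1) : ℤ))
    (htwo : (Nat.fib (t - 1) : ℤ) < a) :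
    (Even t → phi * n - ⌊phi * (n : ℝ)⌋ < 1 / 2) ∧
    (Odd t → (⌈phi * (n : ℝ)⌉ : ℝ) - phi * n < 1 / 2) :=
  stmt15_general n a b t hab hb hdec htwo
end

section
/- Define the set D of down-integers to consist of all n ≥ 2 whose unique decomposition n = a·f_t + b·f_{t-1} (1 ≤ a ≤ b ≤ f_t, t ≥ 2) has t even, and let d_1 < d_2 < ... be its elements in increasing order. Then {d_{k+1} − d_k : k ≥ 1} = {1, 2, 3, 5}. -/
/-!
Represent `n = a·f_t + b·f_{t-1}` by the lattice point `(a, b)` at level `t`. Adding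
`±(f_{t-1-k}, -f_{t-k})` to `(a, b)` changes `n` by `f_k` (d'Ocagne's identity, `t` even), so for
`k = 2, 3, 4, 5` it leads from `n` to `n + 1`, `n + 2`, `n + 3`, `n + 5` whenever the moved point
stays in the triangle `1 ≤ a ≤ b ≤ f_t`; the move for `n + 3` may also leave the triangle and be
brought back at level `t + 2`, using `a·f_{t+2} + b·f_{t+1} = (2a + b)·f_t + (a + b)·f_{t-1}`.
A case analysis on the position of `(a, b)` shows that one of `n + 1`, `n + 3`, `n + 5` is always
a down-integer (in the last case after descending to level `t - 2`), so no gap exceeds `5`. In the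
one corner where none of `n + 1`, `n + 2`, `n + 3` is reached directly, take the representations
of `n` and `n + 4` to a common level: they differ by `(4f_{t-3}, -4f_{t-2})` plus a multiple of
`(f_{t-1}, -f_t)`, and the sizes of the coordinates show that `n + 4` is a down-integer only if
`n + 2` is. The gaps `1, 2, 3, 5` occur at `9, 5, 2, 18`.
-/

/-- The set of down-integers: those `n ≥ 2` whose unique decomposition
`n = a·f_t + b·f_{t-1}` with `1 ≤ a ≤ b ≤ f_t`, `t ≥ 2`, has `t` even. -/
def downSet : Set ℕ :=
  {n | 2 ≤ n ∧ ∃ a b t : ℕ, 2 ≤ t ∧ Even t ∧ 1 ≤ a ∧ a ≤ b ∧ b ≤ Nat.fib t ∧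
    n = a * Nat.fib t + b * Nat.fib (t - 1)}

namespace Int

/-- Stated with free indices so that instances such as `fib (t - 1) = fib (t - 3) + fib (t - 2)`
only leave `ring` side goals. -/
theorem fib_eq_fib_add_fib {n i j : ℤ} (hi : i = n - 2) (hj : j = n - 1) :
    fib n = fib i + fib j := by
  rw [hi, hj, show n - 1 = n - 2 + 1 by ring, ← fib_add_two, sub_add_cancel]

theorem fib_nonneg {n : ℤ} (hn : 0 ≤ n) : 0 ≤ fib n := by
  rw [fib_of_nonneg hn]
  positivity

theorem fib_pos_of_odd {n : ℤ} (hn : Odd n) : 0 < fib n := by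
  obtain ⟨k, rfl⟩ := hn
  exact fib_two_mul_add_one_pos

/-- d'Ocagne's identity. -/
theorem fib_sub_one_mul_fib_sub_fib_mul_fib_sub_one (t j : ℤ) :
    fib (j - 1) * fib t - fib j * fib (t - 1) = -(-1) ^ t.natAbs * fib (j - t) := by
  have h₁ := fib_add (j - t) t
  have h₂ := fib_add (j - t - 1) t
  have r₁ := fib_add_two (j - t - 2)
  have r₂ := fib_add_two (t - 1)
  rw [show j - t + t = j by ring] at h₁
  rw [show j - t - 1 + t = j - 1 by ring, show j - t - 1 - 1 = j - t - 2 by ring] at h₂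
  rw [show j - t - 2 + 2 = j - t by ring, show j - t - 2 + 1 = j - t - 1 by ring] at r₁
  rw [show t - 1 + 2 = t + 1 by ring, show t - 1 + 1 = t by ring] at r₂
  rw [h₁, h₂, ← fib_succ_mul_fib_pred_sub_fib_sq t]
  linear_combination fib (j - t - 1) * fib t * r₂ - fib t ^ 2 * r₁

end Int

namespace DownInteger

open Int (fib)

/-- `Int.fib` extends `f` to negative indices, which makes the moves below uniform in `t`. -/
def fibComb (t a b : ℤ) : ℤ := a * fib t + b * fib (t - 1)

theorem fibComb_shift {t : ℤ} (ht : Even t) (j c a b : ℤ) :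
    fibComb t (a + c * fib (j - 1)) (b - c * fib j) = fibComb t a b - c * fib (j - t) := by
  have h := Int.fib_sub_one_mul_fib_sub_fib_mul_fib_sub_one t j
  rw [ht.natAbs.neg_one_pow] at h
  unfold fibComb
  linear_combination c * h

theorem fibComb_add_two (t a b : ℤ) :
    fibComb (t + 2) a b = fibComb t (2 * a + b) (a + b) := by
  have h₁ := Int.fib_add_two t
  have h₂ := Int.fib_add_two (t - 1)
  rw [show t - 1 + 2 = t + 1 by ring, show t - 1 + 1 = t by ring] at h₂
  unfold fibComb
  rw [show t + 2 - 1 = t + 1 by ring]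
  linear_combination a * h₁ + (a + b) * h₂

theorem eq_add_mul_of_fibComb_eq {t a b c d : ℤ} (h : fibComb t c d = fibComb t a b) :
    ∃ κ : ℤ, c = a + κ * fib (t - 1) ∧ d = b - κ * fib t := by
  rcases eq_or_ne (fib (t - 1)) 0 with h₀ | h₀
  · obtain rfl : t = 1 := by linarith [Int.fib_eq_zero.mp h₀]
    exact ⟨b - d, by simpa [fibComb] using h, by simp⟩
  have hcop : IsCoprime (fib (t - 1)) (fib t) := by
    rw [Int.isCoprime_iff_gcd_eq_one, Int.gcd_fib,
      Int.isCoprime_iff_gcd_eq_one.mp ⟨-1, 1, by ring⟩, Nat.fib_one]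
  unfold fibComb at h
  obtain ⟨κ, hκ⟩ := hcop.dvd_of_dvd_mul_right
    (⟨b - d, by linear_combination h⟩ : fib (t - 1) ∣ (c - a) * fib t)
  exact ⟨κ, by linear_combination hκ, mul_left_cancel₀ h₀ (by linear_combination h - fib t * hκ)⟩

theorem exists_fibComb_add_two_mul_eq (t : ℤ) (m : ℕ) {x y : ℤ} (hx : 1 ≤ x)
    (hxy : x ≤ 2 * y) : ∃ X Y, 1 ≤ X ∧ X ≤ 2 * Y ∧ fibComb (t + 2 * m) x y = fibComb t X Y := by
  induction m generalizing t with
  | zero => exact ⟨x, y, hx, hxy, by simp⟩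
  | succ m ih =>
    obtain ⟨X, Y, hX, hXY, h⟩ := ih (t + 2)
    refine ⟨2 * X + Y, X + Y, by linarith, by linarith, ?_⟩
    rw [← fibComb_add_two, ← h]
    congr 1
    push_cast
    ring

theorem mem_downSet_iff {n : ℕ} :
    n ∈ downSet ↔ ∃ t a b : ℤ, 2 ≤ t ∧ Even t ∧ 1 ≤ a ∧ a ≤ b ∧ b ≤ fib t ∧
      (n : ℤ) = fibComb t a b := by
  constructor
  · rintro ⟨-, a, b, t, ht, he, ha, hab, hb, rfl⟩
    refine ⟨t, a, b, by exact_mod_cast ht, by exact_mod_cast he, by exact_mod_cast ha,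
      by exact_mod_cast hab, by simpa using hb, ?_⟩
    rw [fibComb, show (t : ℤ) - 1 = ((t - 1 : ℕ) : ℤ) by omega]
    simp
  · rintro ⟨t, a, b, ht, he, ha, hab, hb, hn⟩
    lift t to ℕ using by omega
    lift a to ℕ using by omega
    lift b to ℕ using by omega
    rw [fibComb, show (t : ℤ) - 1 = ((t - 1 : ℕ) : ℤ) by omega] at hn
    simp only [Int.fib_natCast] at hn hb
    have h₁ : 1 * 1 ≤ a * Nat.fib t := Nat.mul_le_mul (by omega) (Nat.fib_pos.mpr (by omega))
    have h₂ : 1 * 1 ≤ b * Nat.fib (t - 1) :=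
      Nat.mul_le_mul (by omega) (Nat.fib_pos.mpr (by omega))
    exact ⟨by omega, a, b, t, by exact_mod_cast ht, by exact_mod_cast he, by exact_mod_cast ha,
      by exact_mod_cast hab, by exact_mod_cast hb, by exact_mod_cast hn⟩

theorem mem_downSet_of_eq_fibComb {t a b : ℤ} {n : ℕ} (ht : 2 ≤ t) (he : Even t) (ha : 1 ≤ a)
    (hab : a ≤ b) (hb : b ≤ fib t) (hn : (n : ℤ) = fibComb t a b) : n ∈ downSet :=
  mem_downSet_iff.mpr ⟨t, a, b, ht, he, ha, hab, hb, hn⟩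

theorem eq_two_or_exists_fibComb_of_mem_downSet {n : ℕ} (hn : n ∈ downSet) :
    n = 2 ∨ ∃ t a b : ℤ, 4 ≤ t ∧ Even t ∧ 1 ≤ a ∧ a ≤ b ∧ b ≤ fib t ∧
      (n : ℤ) = fibComb t a b := by
  obtain ⟨t, a, b, ht, he, ha, hab, hb, hn⟩ := mem_downSet_iff.mp hn
  obtain rfl | ht : t = 2 ∨ 4 ≤ t := by obtain ⟨k, rfl⟩ := he; omega
  · obtain rfl : b = 1 := le_antisymm hb (by linarith)
    obtain rfl : a = 1 := le_antisymm hab ha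
    simp only [fibComb, Int.fib_two, Int.fib_one, mul_one, Int.reduceSub, Int.reduceAdd] at hn
    omega
  · exact Or.inr ⟨t, a, b, ht, he, ha, hab, hb, hn⟩

theorem five_mem_downSet : 5 ∈ downSet := ⟨by norm_num, 1, 1, 4, by decide⟩

section Moves

variable {t a b : ℤ} {n : ℕ} (he : Even t) (hn : (n : ℤ) = fibComb t a b)
include he hn

theorem add_one_mem_downSet (ht : 2 ≤ t) (ha : 1 ≤ a) (hab : a + fib (t - 1) ≤ b)
    (hb : b ≤ fib t) : n + 1 ∈ downSet := by
  have h := fibComb_shift he (t - 2) 1 a b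
  rw [show t - 2 - 1 = t - 3 by ring, show t - 2 - t = -2 by ring, Int.fib_neg_two] at h
  simp only [one_mul, sub_neg_eq_add] at h
  have r₁ : fib (t - 1) = fib (t - 3) + fib (t - 2) := Int.fib_eq_fib_add_fib (by ring) (by ring)
  have p₃ : 0 < fib (t - 3) := Int.fib_pos_of_odd (he.sub_odd (by decide))
  have p₂ : 0 ≤ fib (t - 2) := Int.fib_nonneg (by omega)
  exact mem_downSet_of_eq_fibComb (a := a + fib (t - 3)) (b := b - fib (t - 2)) ht he
    (by linarith) (by linarith) (by linarith) (by push_cast; linarith)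

theorem add_two_mem_downSet (ht : 4 ≤ t) (ha : fib (t - 4) < a) (hab : a ≤ b + fib (t - 2))
    (hb : b ≤ fib (t - 1) + fib (t - 4)) : n + 2 ∈ downSet := by
  have h := fibComb_shift he (t - 3) (-1) a b
  rw [show t - 3 - 1 = t - 4 by ring, show t - 3 - t = -3 by ring,
    show fib (-3) = 2 from rfl] at h
  simp only [neg_one_mul, ← sub_eq_add_neg, sub_neg_eq_add] at h
  have r₀ : fib t = fib (t - 2) + fib (t - 1) := Int.fib_eq_fib_add_fib (by ring) (by ring)
  have r₂ : fib (t - 2) = fib (t - 4) + fib (t - 3) := Int.fib_eq_fib_add_fib (by ring) (by ring)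
  have p₃ : 0 < fib (t - 3) := Int.fib_pos_of_odd (he.sub_odd (by decide))
  have p₄ : 0 ≤ fib (t - 4) := Int.fib_nonneg (by omega)
  exact mem_downSet_of_eq_fibComb (a := a - fib (t - 4)) (b := b + fib (t - 3)) (by omega) he
    (by linarith) (by linarith) (by linarith) (by push_cast; linarith)

theorem add_three_mem_downSet (ht : 4 ≤ t) (ha : 1 ≤ a) (hab : a + fib (t - 3) ≤ b)
    (hb : b ≤ fib t) : n + 3 ∈ downSet := by
  have h := fibComb_shift he (t - 4) 1 a b
  rw [show t - 4 - 1 = t - 5 by ring, show t - 4 - t = -4 by ring,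
    show fib (-4) = -3 from rfl] at h
  simp only [one_mul, sub_neg_eq_add] at h
  have r₃ : fib (t - 3) = fib (t - 5) + fib (t - 4) := Int.fib_eq_fib_add_fib (by ring) (by ring)
  have p₅ : 0 < fib (t - 5) := Int.fib_pos_of_odd (he.sub_odd (by decide))
  have p₄ : 0 ≤ fib (t - 4) := Int.fib_nonneg (by omega)
  exact mem_downSet_of_eq_fibComb (a := a + fib (t - 5)) (b := b - fib (t - 4)) (by omega) he
    (by linarith) (by linarith) (by linarith) (by push_cast; linarith)

theorem add_three_mem_downSet_of_lift (ht : 2 ≤ t) (ha : 1 ≤ a) (hab : b < a + fib (t - 3))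
    (hab' : 2 * a + fib (t - 1) ≤ 3 * b) (hb : b ≤ fib t) : n + 3 ∈ downSet := by
  have h := fibComb_shift he (t - 4) 1 a b
  rw [show t - 4 - 1 = t - 5 by ring, show t - 4 - t = -4 by ring,
    show fib (-4) = -3 from rfl] at h
  simp only [one_mul, sub_neg_eq_add] at h
  have r₀ : fib (t + 2) = fib t + fib (t + 1) := Int.fib_add_two t
  have r₁ : fib (t + 1) = fib (t - 1) + fib t := Int.fib_eq_fib_add_fib (by ring) (by ring)
  have r₂ : fib (t - 1) = fib (t - 3) + fib (t - 2) := Int.fib_eq_fib_add_fib (by ring) (by ring)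
  have r₃ : fib (t - 2) = fib (t - 4) + fib (t - 3) := Int.fib_eq_fib_add_fib (by ring) (by ring)
  have r₄ : fib (t - 3) = fib (t - 5) + fib (t - 4) := Int.fib_eq_fib_add_fib (by ring) (by ring)
  have p₁ : 0 < fib (t - 1) := Int.fib_pos_of_odd (he.sub_odd (by decide))
  have p₂ : 0 ≤ fib (t - 2) := Int.fib_nonneg (by omega)
  have hlift : fibComb (t + 2) (a - b + fib (t - 3)) (2 * b - a - fib (t - 2)) =
      fibComb t (a + fib (t - 5)) (b - fib (t - 4)) := by
    rw [fibComb_add_two]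
    congr 1 <;> linarith
  exact mem_downSet_of_eq_fibComb (a := a - b + fib (t - 3)) (b := 2 * b - a - fib (t - 2))
    (by omega) (he.add even_two) (by linarith) (by linarith) (by linarith)
    (by rw [hlift, h]; push_cast; linarith)

theorem add_five_mem_downSet (ht : 4 ≤ t) (ha : fib (t - 6) < a) (hab : a ≤ b + fib (t - 4))
    (hb : b + fib (t - 5) ≤ fib t) : n + 5 ∈ downSet := by
  have h := fibComb_shift he (t - 5) (-1) a b
  rw [show t - 5 - 1 = t - 6 by ring, show t - 5 - t = -5 by ring,
    show fib (-5) = 5 from rfl] at h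
  simp only [neg_one_mul, ← sub_eq_add_neg, sub_neg_eq_add] at h
  have r₄ : fib (t - 4) = fib (t - 6) + fib (t - 5) := Int.fib_eq_fib_add_fib (by ring) (by ring)
  have p₅ : 0 < fib (t - 5) := Int.fib_pos_of_odd (he.sub_odd (by decide))
  exact mem_downSet_of_eq_fibComb (a := a - fib (t - 6)) (b := b + fib (t - 5)) (by omega) he
    (by linarith) (by linarith) (by linarith) (by push_cast; linarith)

end Moves

/-- The weakening of `a ≤ b` to `a ≤ b + f_{t-4}` is what survives the descent
`(a, b) ↦ (2a + b, a + b)` to level `t - 2`. -/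
theorem add_mem_downSet_of_le_add {t a b : ℤ} {n : ℕ} (ht : 4 ≤ t) (he : Even t)
    (hn : (n : ℤ) = fibComb t a b) (ha : 1 ≤ a) (hb₁ : 1 ≤ b) (hab : a ≤ b + fib (t - 4))
    (hb : b ≤ fib t) : n + 1 ∈ downSet ∨ n + 3 ∈ downSet ∨ n + 5 ∈ downSet := by
  by_cases h₁ : a + fib (t - 1) ≤ b
  · exact Or.inl (add_one_mem_downSet he hn (by omega) ha h₁ hb)
  by_cases h₃ : a + fib (t - 3) ≤ b
  · exact Or.inr (Or.inl (add_three_mem_downSet he hn ht ha h₃ hb))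
  by_cases h₃' : 2 * a + fib (t - 1) ≤ 3 * b
  · exact Or.inr (Or.inl (add_three_mem_downSet_of_lift he hn (by omega) ha (by linarith) h₃' hb))
  have r₀ : fib t = fib (t - 2) + fib (t - 1) := Int.fib_eq_fib_add_fib (by ring) (by ring)
  have r₂ : fib (t - 2) = fib (t - 4) + fib (t - 3) := Int.fib_eq_fib_add_fib (by ring) (by ring)
  have r₃ : fib (t - 3) = fib (t - 5) + fib (t - 4) := Int.fib_eq_fib_add_fib (by ring) (by ring)
  have r₄ : fib (t - 4) = fib (t - 6) + fib (t - 5) := Int.fib_eq_fib_add_fib (by ring) (by ring)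
  by_cases h₅ : fib (t - 6) < a
  · exact Or.inr (Or.inr (add_five_mem_downSet he hn ht h₅ hab (by linarith)))
  have ht₈ : 8 ≤ t := by
    by_contra! h
    obtain ⟨k, rfl⟩ := he
    obtain rfl | rfl : k = 2 ∨ k = 3 := by omega
    · have : fib (2 + 2 - 6) = -1 := rfl
      omega
    · have : fib (3 + 3 - 6) = 0 := rfl
      omega
  have r₅ : fib (t - 5) = fib (t - 7) + fib (t - 6) := Int.fib_eq_fib_add_fib (by ring) (by ring)
  have p₇ : 0 ≤ fib (t - 7) := Int.fib_nonneg (by omega)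
  have hn' : (n : ℤ) = fibComb (t - 2) (2 * a + b) (a + b) := by
    rw [hn, ← fibComb_add_two, sub_add_cancel]
  exact add_mem_downSet_of_le_add (by omega) (he.sub even_two) hn' (by linarith) (by linarith)
    (by rw [show t - 2 - 4 = t - 6 by ring]; linarith) (by linarith)
termination_by t.toNat
decreasing_by omega

theorem add_mem_downSet {n : ℕ} (hn : n ∈ downSet) :
    n + 1 ∈ downSet ∨ n + 3 ∈ downSet ∨ n + 5 ∈ downSet := by
  obtain rfl | ⟨t, a, b, ht, he, ha, hab, hb, hn⟩ := eq_two_or_exists_fibComb_of_mem_downSet hn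
  · exact Or.inr (Or.inl five_mem_downSet)
  have p₄ : 0 ≤ fib (t - 4) := Int.fib_nonneg (by omega)
  exact add_mem_downSet_of_le_add ht he hn ha (by linarith) (by linarith) hb

/-- Every solution is `(a + 4f_{t-3} + κ f_{t-1}, b - 4f_{t-2} - κ f_t)`: for `κ ≥ -1` the
second coordinate, for `κ ≤ -2` the first one is not positive. -/
theorem fibComb_ne_add_four {t a b c d : ℤ} (ht : 4 ≤ t) (he : Even t) (ha : a ≤ fib (t - 4))
    (hb : b ≤ fib (t - 2)) (hc : 1 ≤ c) (hd : 1 ≤ d) : fibComb t c d ≠ fibComb t a b + 4 := by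
  intro h
  have h₄ := fibComb_shift he (t - 2) 4 a b
  rw [show t - 2 - 1 = t - 3 by ring, show t - 2 - t = -2 by ring, Int.fib_neg_two] at h₄
  obtain ⟨κ, rfl, rfl⟩ := eq_add_mul_of_fibComb_eq (h.trans (by linarith))
  have r₀ : fib t = fib (t - 2) + fib (t - 1) := Int.fib_eq_fib_add_fib (by ring) (by ring)
  have r₁ : fib (t - 1) = fib (t - 3) + fib (t - 2) := Int.fib_eq_fib_add_fib (by ring) (by ring)
  have r₂ : fib (t - 2) = fib (t - 4) + fib (t - 3) := Int.fib_eq_fib_add_fib (by ring) (by ring)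
  have p₄ : 0 ≤ fib (t - 4) := Int.fib_nonneg (by omega)
  have p₃ : 0 < fib (t - 3) := Int.fib_pos_of_odd (he.sub_odd (by decide))
  have p₀ : 0 ≤ fib t := Int.fib_nonneg (by omega)
  rcases le_or_gt 0 κ with hκ | hκ
  · nlinarith
  obtain rfl | hκ : κ = -1 ∨ κ ≤ -2 := by omega
  · linarith
  · nlinarith

/-- Writing `(c, d)` as in `fibComb_ne_add_four`, `c ≤ d` forces `κ ≤ -2` because `B < A`, and
`d ≤ f_u` forces `κ ≥ -2`; so `(c, d) = (A - 2f_{u-4}, B + 2f_{u-3})`, and `n + 2` is represented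
by `(A - f_{u-4}, B + f_{u-3})`. -/
theorem add_two_mem_downSet_of_fibComb_add_four {u A B c d : ℤ} {n : ℕ} (hu : 4 ≤ u)
    (he : Even u) (hn : (n : ℤ) = fibComb u A B) (hBA : B < A) (hAB : 3 * A ≤ 5 * B)
    (hc : 1 ≤ c) (hcd : c ≤ d) (hd : d ≤ fib u) (h : (n : ℤ) + 4 = fibComb u c d) :
    n + 2 ∈ downSet := by
  have h₄ := fibComb_shift he (u - 2) 4 A B
  rw [show u - 2 - 1 = u - 3 by ring, show u - 2 - u = -2 by ring, Int.fib_neg_two] at h₄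
  obtain ⟨κ, rfl, rfl⟩ := eq_add_mul_of_fibComb_eq (h.symm.trans (by linarith))
  have r₀ : fib u = fib (u - 2) + fib (u - 1) := Int.fib_eq_fib_add_fib (by ring) (by ring)
  have r₁ : fib (u - 1) = fib (u - 3) + fib (u - 2) := Int.fib_eq_fib_add_fib (by ring) (by ring)
  have r₂ : fib (u - 2) = fib (u - 4) + fib (u - 3) := Int.fib_eq_fib_add_fib (by ring) (by ring)
  have r₃ : fib (u - 3) = fib (u - 5) + fib (u - 4) := Int.fib_eq_fib_add_fib (by ring) (by ring)
  have p₄ : 0 ≤ fib (u - 4) := Int.fib_nonneg (by omega)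
  have p₅ : 0 < fib (u - 5) := Int.fib_pos_of_odd (he.sub_odd (by decide))
  obtain rfl : κ = -2 := by
    rcases lt_trichotomy κ (-2) with hκ | hκ | hκ
    · nlinarith
    · exact hκ
    · nlinarith
  exact add_two_mem_downSet he hn hu (by linarith) (by linarith) (by linarith)

theorem add_two_mem_downSet_of_add_four_mem {t a b : ℤ} {n : ℕ} (ht : 4 ≤ t) (he : Even t)
    (hn : (n : ℤ) = fibComb t a b) (ha : 1 ≤ a) (hab : a ≤ b) (ha' : a ≤ fib (t - 4))
    (hb' : b ≤ fib (t - 2)) (h₄ : n + 4 ∈ downSet) : n + 2 ∈ downSet := by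
  obtain ⟨u, c, d, hu, hue, hc, hcd, hd, h₄⟩ := mem_downSet_iff.mp h₄
  push_cast at h₄
  rcases le_or_gt t u with htu | hut
  · obtain ⟨m, rfl⟩ : ∃ m : ℕ, u = t + 2 * m := by
      obtain ⟨p, rfl⟩ := he
      obtain ⟨q, rfl⟩ := hue
      exact ⟨(q - p).toNat, by omega⟩
    obtain ⟨C, D, hC, hCD, hval⟩ :=
      exists_fibComb_add_two_mul_eq t m hc (by linarith : c ≤ 2 * d)
    exact absurd (by rw [← hval, ← h₄, hn]) (fibComb_ne_add_four ht he ha' hb' hC (by linarith))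
  have hu₄ : 4 ≤ u := by
    obtain ⟨q, rfl⟩ := hue
    by_contra! hq
    obtain rfl : q = 1 := by omega
    obtain rfl : d = 1 := le_antisymm hd (by linarith)
    obtain rfl : c = 1 := le_antisymm hcd hc
    simp only [fibComb, Int.fib_two, Int.fib_one, mul_one, Int.reduceSub, Int.reduceAdd] at h₄
    omega
  obtain ⟨m, rfl⟩ : ∃ m : ℕ, t = u + 2 + 2 * m := by
    obtain ⟨p, rfl⟩ := he
    obtain ⟨q, rfl⟩ := hue
    exact ⟨(p - q - 1).toNat, by omega⟩
  obtain ⟨X, Y, hX, hXY, hval⟩ :=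
    exists_fibComb_add_two_mul_eq (u + 2) m ha (by linarith : a ≤ 2 * b)
  rw [hval, fibComb_add_two] at hn
  exact add_two_mem_downSet_of_fibComb_add_four hu₄ hue hn (by linarith) (by linarith) hc hcd hd h₄

theorem add_mem_downSet_of_add_four_mem {n : ℕ} (hn : n ∈ downSet) (h₄ : n + 4 ∈ downSet) :
    n + 1 ∈ downSet ∨ n + 2 ∈ downSet ∨ n + 3 ∈ downSet := by
  obtain rfl | ⟨t, a, b, ht, he, ha, hab, hb, hn⟩ := eq_two_or_exists_fibComb_of_mem_downSet hn
  · exact Or.inr (Or.inr five_mem_downSet)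
  by_cases h₁ : a + fib (t - 1) ≤ b
  · exact Or.inl (add_one_mem_downSet he hn (by omega) ha h₁ hb)
  by_cases h₃ : a + fib (t - 3) ≤ b
  · exact Or.inr (Or.inr (add_three_mem_downSet he hn ht ha h₃ hb))
  by_cases h₃' : 2 * a + fib (t - 1) ≤ 3 * b
  · exact Or.inr (Or.inr (add_three_mem_downSet_of_lift he hn (by omega) ha (by linarith) h₃' hb))
  have r₂ : fib (t - 2) = fib (t - 4) + fib (t - 3) := Int.fib_eq_fib_add_fib (by ring) (by ring)
  have p₂ : 0 ≤ fib (t - 2) := Int.fib_nonneg (by omega)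
  have p₄ : 0 ≤ fib (t - 4) := Int.fib_nonneg (by omega)
  by_cases h₂ : fib (t - 4) < a
  · exact Or.inr (Or.inl (add_two_mem_downSet he hn ht h₂ (by linarith) (by linarith)))
  · exact Or.inr (Or.inl (add_two_mem_downSet_of_add_four_mem ht he hn ha hab (by linarith)
      (by linarith) h₄))

theorem eq_of_mem_downSet_of_le {n : ℕ} (hn : n ∈ downSet) (h : n ≤ 22) :
    n = 2 ∨ n = 5 ∨ n = 7 ∨ n = 9 ∨ n = 10 ∨ n = 12 ∨ n = 13 ∨ n = 15 ∨ n = 18 := by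
  obtain ⟨-, a, b, t, ht, he, ha, hab, hb, rfl⟩ := hn
  have ht₇ : t ≤ 7 := by
    by_contra! h'
    have h₈ : Nat.fib 8 ≤ a * Nat.fib t :=
      (Nat.fib_mono (by omega)).trans (Nat.le_mul_of_pos_left _ ha)
    have h₇ : Nat.fib 7 ≤ b * Nat.fib (t - 1) :=
      (Nat.fib_mono (by omega)).trans (Nat.le_mul_of_pos_left _ (by omega))
    rw [show Nat.fib 8 = 21 from rfl] at h₈
    rw [show Nat.fib 7 = 13 from rfl] at h₇
    omega
  obtain ⟨k, rfl⟩ := he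
  obtain rfl | rfl | rfl : k = 1 ∨ k = 2 ∨ k = 3 := by omega
  all_goals simp only [Nat.reduceAdd, Nat.fib_add_two, Nat.fib_zero, zero_add, Nat.fib_one,
    mul_one, Nat.add_one_sub_one] at hb h ⊢
  all_goals interval_cases b <;> omega

end DownInteger

theorem StrictMono.exists_apply_succ_sub_eq_iff {d : ℕ → ℕ} (hd : StrictMono d) {g : ℕ} :
    (∃ k, d (k + 1) - d k = g) ↔
      ∃ x ∈ Set.range d, 0 < g ∧ x + g ∈ Set.range d ∧
        ∀ i, 0 < i → i < g → x + i ∉ Set.range d := by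
  constructor
  · rintro ⟨k, rfl⟩
    have hk := hd k.lt_add_one
    refine ⟨d k, ⟨k, rfl⟩, by omega, ⟨k + 1, by omega⟩, ?_⟩
    rintro i hi hig ⟨m, hm⟩
    have h₁ : k < m := hd.lt_iff_lt.mp (by omega)
    have h₂ : m < k + 1 := hd.lt_iff_lt.mp (by omega)
    omega
  · rintro ⟨_, ⟨k, rfl⟩, hg, ⟨l, hl⟩, hgap⟩
    have hkl : k < l := hd.lt_iff_lt.mp (by omega)
    have hle : d (k + 1) ≤ d l := hd.monotone hkl
    have hlt := hd k.lt_add_one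
    refine ⟨k, ?_⟩
    by_contra hne
    exact hgap (d (k + 1) - d k) (by omega) (by omega) ⟨k + 1, by omega⟩

theorem stmt16 (d : ℕ → ℕ) (hmono : StrictMono d) (hrange : Set.range d = downSet) :
    {m : ℕ | ∃ k : ℕ, d (k + 1) - d k = m} = {1, 2, 3, 5} := by
  ext g
  rw [Set.mem_ofPred_eq, hmono.exists_apply_succ_sub_eq_iff, hrange]
  simp only [Set.mem_insert_iff, Set.mem_singleton_iff]
  constructor
  · rintro ⟨x, hx, hg, hxg, hgap⟩
    have hg₅ : g ≤ 5 := by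
      by_contra! hlt
      rcases DownInteger.add_mem_downSet hx with h | h | h <;>
        exact hgap _ (by norm_num) (by omega) h
    have hg₄ : g ≠ 4 := by
      rintro rfl
      rcases DownInteger.add_mem_downSet_of_add_four_mem hx hxg with h | h | h <;>
        exact hgap _ (by norm_num) (by norm_num) h
    omega
  · rintro (rfl | rfl | rfl | rfl)
    · exact ⟨9, ⟨by norm_num, 1, 3, 4, by decide⟩, by norm_num, ⟨by norm_num, 2, 2, 4, by decide⟩,
        fun i hi hi1 => by omega⟩
    · exact ⟨5, DownInteger.five_mem_downSet, by norm_num, ⟨by norm_num, 1, 2, 4, by decide⟩,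
        fun i hi hi2 h => by have := DownInteger.eq_of_mem_downSet_of_le h (by omega); omega⟩
    · exact ⟨2, ⟨le_rfl, 1, 1, 2, by decide⟩, by norm_num, DownInteger.five_mem_downSet,
        fun i hi hi3 h => by have := DownInteger.eq_of_mem_downSet_of_le h (by omega); omega⟩
    · exact ⟨18, ⟨by norm_num, 1, 2, 6, by decide⟩, by norm_num,
        ⟨by norm_num, 1, 3, 6, by decide⟩,
        fun i hi hi5 h => by have := DownInteger.eq_of_mem_downSet_of_le h (by omega); omega⟩
end

section
/- For every positive integer n, there exists an integer ℓ with 1 ≤ ℓ ≤ 5 such that the fractional part of φ·(n+ℓ) is less than 1/(√5·φ), where φ = (1+√5)/2. -/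
lemma Int.fract_add_lt_of_le_of_lt {R : Type*} [CommRing R] [LinearOrder R] [IsStrictOrderedRing R]
    [FloorRing R] {x a c : R} (k : ℤ) (h₀ : k ≤ Int.fract x + a)
    (h₁ : Int.fract x + a < k + c) : Int.fract (x + a) < c := by
  have hfloor : ((⌊x⌋ + k : ℤ) : R) ≤ ⌊x + a⌋ :=
    Int.cast_le.mpr (Int.le_floor.mpr (by push_cast; linarith [Int.floor_add_fract x]))
  push_cast at hfloor
  rw [← Int.self_sub_floor] at h₁ ⊢
  linarith

lemma sqrt_five_mul_phi : Real.sqrt 5 * phi = phi + 2 := by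
  have h : Real.sqrt 5 ^ 2 = 5 := Real.sq_sqrt (by norm_num)
  unfold phi
  linear_combination h / 2

lemma phi_mem_Ioo : phi ∈ Set.Ioo 1.618 1.6181 := by
  have h₀ : Real.sqrt 5 ^ 2 = 5 := Real.sq_sqrt (by norm_num)
  have h₁ : 0 ≤ Real.sqrt 5 := Real.sqrt_nonneg 5
  constructor <;> unfold phi <;> nlinarith

lemma exists_le_add_phi_mul_lt {t : ℝ} (ht₀ : 0 ≤ t) (ht₁ : t < 1) :
    ∃ ℓ : ℕ, 1 ≤ ℓ ∧ ℓ ≤ 5 ∧ ∃ k : ℤ, k ≤ t + phi * ℓ ∧ t + phi * ℓ < k + 1 / (phi + 2) := by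
  obtain ⟨hφ₀, hφ₁⟩ := phi_mem_Ioo
  have hc : 0.2763 < 1 / (phi + 2) := by
    rw [lt_div_iff₀ (by linarith)]
    linarith
  rcases lt_or_ge t 0.17 with h₅ | h₅
  · exact ⟨5, by norm_num, by norm_num, 8, by push_cast; linarith, by push_cast; linarith⟩
  rcases lt_or_ge t 0.41 with h₃ | h₃
  · exact ⟨3, by norm_num, by norm_num, 5, by push_cast; linarith, by push_cast; linarith⟩
  rcases lt_or_ge t 0.64 with h₁ | h₁
  · exact ⟨1, by norm_num, by norm_num, 2, by push_cast; linarith, by push_cast; linarith⟩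
  rcases lt_or_ge t 0.79 with h₄ | h₄
  · exact ⟨4, by norm_num, by norm_num, 7, by push_cast; linarith, by push_cast; linarith⟩
  · exact ⟨2, by norm_num, by norm_num, 4, by push_cast; linarith, by push_cast; linarith⟩

theorem stmt17_general (n : ℕ) :
    ∃ ℓ : ℕ, 1 ≤ ℓ ∧ ℓ ≤ 5 ∧
      Int.fract (phi * ((n : ℝ) + (ℓ : ℝ))) < 1 / (Real.sqrt 5 * phi) := by
  obtain ⟨ℓ, hℓ₁, hℓ₅, k, h₀, h₁⟩ :=
    exists_le_add_phi_mul_lt (Int.fract_nonneg (phi * n)) (Int.fract_lt_one (phi * n))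
  refine ⟨ℓ, hℓ₁, hℓ₅, ?_⟩
  rw [sqrt_five_mul_phi, mul_add]
  exact Int.fract_add_lt_of_le_of_lt k h₀ h₁

theorem stmt17 (n : ℕ) (hn : 1 ≤ n) :
    ∃ ℓ : ℕ, 1 ≤ ℓ ∧ ℓ ≤ 5 ∧
      Int.fract (phi * ((n : ℝ) + (ℓ : ℝ))) < 1 / (Real.sqrt 5 * phi) :=
  stmt17_general n
end
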